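/- arXiv:math/9804110 — 9 statements merged into one kernel-verified Lean document; each statement's English description precedes it below -/
import Mathlib

section
/- Let n ≥ 1 and let A, B ⊆ Sⁿ be convex subsets. Then the intersection A ∩ B is either a convex subset of Sⁿ or equals {x, −x} for some x ∈ Sⁿ (a pair of antipodal points). -/
open scoped RealInnerProductSpace

noncomputable section

/-- `Esp n` is `ℝ^{n+1}` with its standard inner product. -/
abbrev Esp (n : ℕ) : Type := EuclideanSpace ℝ (Fin (n + 1))

/-- The unit sphere `Sⁿ ⊆ ℝ^{n+1}`. -/
def sphereSet (n : ℕ) : Set (Esp n) := {x | ‖x‖ = 1}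

/-- A convex segment in `Sⁿ`: `{(cos t)·u + (sin t)·v : 0 ≤ t ≤ a}` for an
orthonormal pair `u, v` and some `a ∈ [0, π]`. -/
def IsConvexSegment {n : ℕ} (S : Set (Esp n)) : Prop :=
  ∃ (u v : Esp n) (a : ℝ), ‖u‖ = 1 ∧ ‖v‖ = 1 ∧ ⟪u, v⟫ = 0 ∧
    0 ≤ a ∧ a ≤ Real.pi ∧
    S = (fun t : ℝ => Real.cos t • u + Real.sin t • v) '' Set.Icc 0 a

/-- A subset of `Sⁿ` is convex if any two of its points are contained in a
convex segment contained in the set. -/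
def SphConvex {n : ℕ} (A : Set (Esp n)) : Prop :=
  ∀ x ∈ A, ∀ y ∈ A, ∃ S : Set (Esp n), IsConvexSegment S ∧ S ⊆ A ∧ x ∈ S ∧ y ∈ S

namespace SphAux

variable {n : ℕ}

lemma inner_f {u v : Esp n} (hu : ‖u‖ = 1) (hv : ‖v‖ = 1) (huv : ⟪u, v⟫ = 0) (s t : ℝ) :
    ⟪Real.cos s • u + Real.sin s • v, Real.cos t • u + Real.sin t • v⟫
      = Real.cos (t - s) := by
  have huu : ⟪u, u⟫ = 1 := by
    rw [real_inner_self_eq_norm_sq, hu]; norm_num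
  have hvv : ⟪v, v⟫ = 1 := by
    rw [real_inner_self_eq_norm_sq, hv]; norm_num
  have hvu : ⟪v, u⟫ = 0 := by rw [real_inner_comm]; exact huv
  simp only [inner_add_left, inner_add_right, real_inner_smul_left, real_inner_smul_right,
    huu, hvv, huv, hvu, Real.cos_sub]
  ring

/-- Key lemma: a convex segment containing `x` and `y` at angle `θ ∈ (0,π)`
contains the whole minimizing arc from `x` to `y`. -/
lemma mem_of_mem_segment {S : Set (Esp n)} (hS : IsConvexSegment S)
    {x y : Esp n} (hx : x ∈ S) (hy : y ∈ S) {θ : ℝ} (hθ0 : 0 < θ) (hθπ : θ < Real.pi)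
    (hcos : ⟪x, y⟫ = Real.cos θ) {r : ℝ} (hr0 : 0 ≤ r) (hrθ : r ≤ θ) :
    Real.cos r • x + Real.sin r • ((Real.sin θ)⁻¹ • (y - Real.cos θ • x)) ∈ S := by
  obtain ⟨u, v, a, hu, hv, huv, ha0, haπ, rfl⟩ := hS
  obtain ⟨s, hs, rfl⟩ := hx
  obtain ⟨t, ht, rfl⟩ := hy
  have hsinθ : Real.sin θ ≠ 0 := (Real.sin_pos_of_pos_of_lt_pi hθ0 hθπ).ne'
  have hcos' : Real.cos (t - s) = Real.cos θ := by
    rw [← hcos, inner_f hu hv huv]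
  have habs : |t - s| = θ := by
    apply Real.injOn_cos ⟨abs_nonneg _, ?_⟩ ⟨hθ0.le, hθπ.le⟩
    · rw [Real.cos_abs, hcos']
    · have := hs.1; have := hs.2; have := ht.1; have := ht.2
      rw [abs_le]; constructor <;> linarith
  rcases abs_eq hθ0.le |>.mp habs with h | h
  · -- t - s = θ
    refine ⟨s + r, ⟨by linarith [hs.1], by linarith [ht.2]⟩, ?_⟩
    have ht' : t = s + θ := by linarith
    subst ht'
    match_scalars <;> field_simp <;>
      simp only [Real.cos_add, Real.sin_add, Real.cos_sub, Real.sin_sub] <;> ring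
  · -- t - s = -θ
    refine ⟨s - r, ⟨by linarith [ht.1], by linarith [hs.2]⟩, ?_⟩
    have ht' : t = s - θ := by linarith
    subst ht'
    match_scalars <;> field_simp <;>
      simp only [Real.cos_add, Real.sin_add, Real.cos_sub, Real.sin_sub] <;> ring

lemma arc_mem {A : Set (Esp n)} (hAc : SphConvex A) {x y : Esp n} (hx : x ∈ A) (hy : y ∈ A)
    {θ : ℝ} (hθ0 : 0 < θ) (hθπ : θ < Real.pi) (hcos : ⟪x, y⟫ = Real.cos θ)
    {r : ℝ} (hr0 : 0 ≤ r) (hrθ : r ≤ θ) :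
    Real.cos r • x + Real.sin r • ((Real.sin θ)⁻¹ • (y - Real.cos θ • x)) ∈ A := by
  obtain ⟨S, hS, hSA, hxS, hyS⟩ := hAc x hx y hy
  exact hSA (mem_of_mem_segment hS hxS hyS hθ0 hθπ hcos hr0 hrθ)

lemma dirv_norm {x y : Esp n} (hx : ‖x‖ = 1) (hy : ‖y‖ = 1) {θ : ℝ}
    (hθ0 : 0 < θ) (hθπ : θ < Real.pi) (hcos : ⟪x, y⟫ = Real.cos θ) :
    ‖(Real.sin θ)⁻¹ • (y - Real.cos θ • x)‖ = 1 := by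
  have hsin : 0 < Real.sin θ := Real.sin_pos_of_pos_of_lt_pi hθ0 hθπ
  have hxx : ⟪x, x⟫ = 1 := by rw [real_inner_self_eq_norm_sq, hx]; norm_num
  have hyy : ⟪y, y⟫ = 1 := by rw [real_inner_self_eq_norm_sq, hy]; norm_num
  have hyx : ⟪y, x⟫ = Real.cos θ := by rw [real_inner_comm]; exact hcos
  have hsq : ‖y - Real.cos θ • x‖ ^ 2 = Real.sin θ ^ 2 := by
    rw [← real_inner_self_eq_norm_sq]
    simp only [inner_sub_left, inner_sub_right, real_inner_smul_left, real_inner_smul_right,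
      hxx, hyy, hyx, hcos]
    have := Real.sin_sq_add_cos_sq θ
    nlinarith
  have hnorm : ‖y - Real.cos θ • x‖ = Real.sin θ := by
    nlinarith [norm_nonneg (y - Real.cos θ • x)]
  rw [norm_smul, hnorm, Real.norm_eq_abs, abs_inv, abs_of_pos hsin]
  field_simp

lemma dirv_inner {x y : Esp n} (hx : ‖x‖ = 1) {θ : ℝ} (hcos : ⟪x, y⟫ = Real.cos θ) :
    ⟪x, (Real.sin θ)⁻¹ • (y - Real.cos θ • x)⟫ = 0 := by
  have hxx : ⟪x, x⟫ = 1 := by rw [real_inner_self_eq_norm_sq, hx]; norm_num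
  rw [real_inner_smul_right, inner_sub_right, real_inner_smul_right, hxx, hcos]
  ring

lemma exists_unit_orthogonal (hn : 1 ≤ n) (x : Esp n) :
    ∃ v : Esp n, ‖v‖ = 1 ∧ ⟪x, v⟫ = 0 := by
  have hK : ((ℝ ∙ x)ᗮ : Submodule ℝ (Esp n)) ≠ ⊥ := by
    intro h
    have htop : (ℝ ∙ x : Submodule ℝ (Esp n)) = ⊤ := Submodule.orthogonal_eq_bot_iff.mp h
    have h1 : Module.finrank ℝ (Esp n) = n + 1 := finrank_euclideanSpace_fin
    have h2 : Module.finrank ℝ (ℝ ∙ x : Submodule ℝ (Esp n)) ≤ 1 := by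
      by_cases hx0 : x = 0
      · subst hx0
        rw [Submodule.span_zero_singleton]
        simp
      · rw [finrank_span_singleton hx0]
    rw [htop, finrank_top, h1] at h2
    omega
  obtain ⟨w, hwK, hw0⟩ := (Submodule.ne_bot_iff _).mp hK
  refine ⟨‖w‖⁻¹ • w, ?_, ?_⟩
  · rw [norm_smul, Real.norm_eq_abs, abs_inv, abs_of_pos (norm_pos_iff.mpr hw0)]
    exact inv_mul_cancel₀ (norm_ne_zero_iff.mpr hw0)
  · have h0 : ⟪x, w⟫ = 0 := by
      exact (Submodule.mem_orthogonal _ w).mp hwK x (Submodule.mem_span_singleton_self x)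
    rw [real_inner_smul_right, h0, mul_zero]

lemma singleton_segment (hn : 1 ≤ n) {x : Esp n} (hx : ‖x‖ = 1) :
    IsConvexSegment ({x} : Set (Esp n)) := by
  obtain ⟨v, hv1, hxv⟩ := exists_unit_orthogonal hn x
  refine ⟨x, v, 0, hx, hv1, hxv, le_refl 0, Real.pi_pos.le, ?_⟩
  rw [Set.Icc_self, Set.image_singleton]
  simp

/-- Pure algebraic identity used to glue two arcs into a semicircle. -/
lemma semicircle_id {x z : Esp n} {θ t : ℝ} (hθ0 : 0 < θ) (hθπ : θ < Real.pi) :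
    Real.cos t • x + Real.sin t • ((Real.sin θ)⁻¹ • (z - Real.cos θ • x))
      = Real.cos (t - θ) • z + Real.sin (t - θ) •
        ((Real.sin (Real.pi - θ))⁻¹ • ((-x) - Real.cos (Real.pi - θ) • z)) := by
  have hsinθ : Real.sin θ ≠ 0 := (Real.sin_pos_of_pos_of_lt_pi hθ0 hθπ).ne'
  rw [Real.sin_pi_sub, Real.cos_pi_sub]
  match_scalars
  · field_simp
    simp only [Real.cos_sub, Real.sin_sub]
    ring
  · field_simp
    try simp only [Real.cos_sub, Real.sin_sub]
    linear_combination (-Real.sin t) * Real.sin_sq_add_cos_sq θ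

lemma inner_le_one {x y : Esp n} (hx : ‖x‖ = 1) (hy : ‖y‖ = 1) : ⟪x, y⟫ ≤ 1 := by
  have := abs_real_inner_le_norm x y
  rw [hx, hy] at this
  have := abs_le.mp (by simpa using this)
  exact this.2

lemma neg_one_le_inner {x y : Esp n} (hx : ‖x‖ = 1) (hy : ‖y‖ = 1) : -1 ≤ ⟪x, y⟫ := by
  have := abs_real_inner_le_norm x y
  rw [hx, hy] at this
  have := abs_le.mp (by simpa using this)
  exact this.1

lemma inner_lt_one {x y : Esp n} (hx : ‖x‖ = 1) (hy : ‖y‖ = 1) (hxy : x ≠ y) :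
    ⟪x, y⟫ < 1 := by
  refine lt_of_le_of_ne (inner_le_one hx hy) fun h => hxy ?_
  exact (inner_eq_one_iff_of_norm_eq_one hx hy).mp (by exact_mod_cast h)

lemma neg_one_lt_inner {x y : Esp n} (hx : ‖x‖ = 1) (hy : ‖y‖ = 1) (hxy : y ≠ -x) :
    -1 < ⟪x, y⟫ := by
  refine lt_of_le_of_ne (neg_one_le_inner hx hy) fun h => hxy ?_
  have hny : ‖-y‖ = 1 := by rwa [norm_neg]
  have h1 : ⟪x, -y⟫ = (1 : ℝ) := by rw [inner_neg_right, ← h]; norm_num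
  have h2 := (inner_eq_one_iff_of_norm_eq_one hx hny).mp (by exact_mod_cast h1)
  rw [h2]; simp

end SphAux

open SphAux in
/-- Theorem: the intersection of two convex subsets of `Sⁿ` is convex or a
pair of antipodal points. -/
theorem sphConvex_inter_or_antipodal (n : ℕ) (hn : 1 ≤ n)
    (A B : Set (Esp n)) (hA : A ⊆ sphereSet n) (hB : B ⊆ sphereSet n)
    (hAc : SphConvex A) (hBc : SphConvex B) :
    SphConvex (A ∩ B) ∨ ∃ x ∈ sphereSet n, A ∩ B = {x, -x} := by
  by_cases hpair : ∃ x, x ∈ A ∩ B ∧ -x ∈ A ∩ B ∧ A ∩ B ⊆ {x, -x}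
  · obtain ⟨x, hx, hnx, hsub⟩ := hpair
    right
    refine ⟨x, hA hx.1, Set.Subset.antisymm hsub ?_⟩
    rintro y (rfl | rfl)
    · exact hx
    · exact hnx
  · left
    intro x hx y hy
    have hxs : ‖x‖ = 1 := hA hx.1
    have hys : ‖y‖ = 1 := hA hy.1
    by_cases hxy : x = y
    · subst hxy
      exact ⟨{x}, singleton_segment hn hxs, by simpa using hx, rfl, rfl⟩
    by_cases hyx : y = -x
    · -- antipodal case : use a third point
      subst hyx
      have hnsub : ¬ A ∩ B ⊆ {x, -x} := fun h => hpair ⟨x, hx, hy, h⟩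
      obtain ⟨z, hz, hznot⟩ := Set.not_subset.mp hnsub
      have hzx : z ≠ x := fun h => hznot (by simp [h])
      have hznx : z ≠ -x := fun h => hznot (by simp [h])
      have hzs : ‖z‖ = 1 := hA hz.1
      set θ := Real.arccos ⟪x, z⟫ with hθdef
      have hip1 : ⟪x, z⟫ < 1 := inner_lt_one hxs hzs (Ne.symm hzx)
      have hip2 : -1 < ⟪x, z⟫ := neg_one_lt_inner hxs hzs hznx
      have hθ0 : 0 < θ := Real.arccos_pos.mpr hip1
      have hθπ : θ < Real.pi := lt_of_le_of_ne (Real.arccos_le_pi _)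
        (fun h => absurd (Real.arccos_eq_pi.mp h) (not_le.mpr hip2))
      have hcos : ⟪x, z⟫ = Real.cos θ := (Real.cos_arccos hip2.le hip1.le).symm
      set v : Esp n := (Real.sin θ)⁻¹ • (z - Real.cos θ • x) with hvdef
      refine ⟨(fun t : ℝ => Real.cos t • x + Real.sin t • v) '' Set.Icc 0 Real.pi,
        ⟨x, v, Real.pi, hxs, dirv_norm hxs hzs hθ0 hθπ hcos, dirv_inner hxs hcos,
          Real.pi_pos.le, le_refl _, rfl⟩, ?_, ?_, ?_⟩
      · rintro p ⟨t, ht, rfl⟩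
        rcases le_total t θ with h | h
        · exact ⟨arc_mem hAc hx.1 hz.1 hθ0 hθπ hcos ht.1 h,
            arc_mem hBc hx.2 hz.2 hθ0 hθπ hcos ht.1 h⟩
        · show Real.cos t • x + Real.sin t • v ∈ A ∩ B
          rw [hvdef, semicircle_id hθ0 hθπ]
          have hθπ2 : Real.pi - θ < Real.pi := by linarith
          have hθ02 : 0 < Real.pi - θ := by linarith
          have hcos2 : ⟪z, -x⟫ = Real.cos (Real.pi - θ) := by
            rw [inner_neg_right, real_inner_comm, hcos, Real.cos_pi_sub]
          have hr0 : 0 ≤ t - θ := by linarith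
          have hrθ : t - θ ≤ Real.pi - θ := by linarith [ht.2]
          exact ⟨arc_mem hAc hz.1 hy.1 hθ02 hθπ2 hcos2 hr0 hrθ,
            arc_mem hBc hz.2 hy.2 hθ02 hθπ2 hcos2 hr0 hrθ⟩
      · exact ⟨0, ⟨le_refl 0, Real.pi_pos.le⟩, by simp⟩
      · refine ⟨Real.pi, ⟨Real.pi_pos.le, le_refl _⟩, ?_⟩
        simp [neg_smul]
    · -- generic case : minimizing arc
      set θ := Real.arccos ⟪x, y⟫ with hθdef
      have hip1 : ⟪x, y⟫ < 1 := inner_lt_one hxs hys hxy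
      have hip2 : -1 < ⟪x, y⟫ := neg_one_lt_inner hxs hys hyx
      have hθ0 : 0 < θ := Real.arccos_pos.mpr hip1
      have hθπ : θ < Real.pi := lt_of_le_of_ne (Real.arccos_le_pi _)
        (fun h => absurd (Real.arccos_eq_pi.mp h) (not_le.mpr hip2))
      have hcos : ⟪x, y⟫ = Real.cos θ := (Real.cos_arccos hip2.le hip1.le).symm
      have hsin : Real.sin θ ≠ 0 := (Real.sin_pos_of_pos_of_lt_pi hθ0 hθπ).ne'
      set v : Esp n := (Real.sin θ)⁻¹ • (y - Real.cos θ • x) with hvdef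
      refine ⟨(fun t : ℝ => Real.cos t • x + Real.sin t • v) '' Set.Icc 0 θ,
        ⟨x, v, θ, hxs, dirv_norm hxs hys hθ0 hθπ hcos, dirv_inner hxs hcos,
          hθ0.le, hθπ.le, rfl⟩, ?_, ?_, ?_⟩
      · rintro p ⟨t, ht, rfl⟩
        exact ⟨arc_mem hAc hx.1 hy.1 hθ0 hθπ hcos ht.1 ht.2,
          arc_mem hBc hx.2 hy.2 hθ0 hθπ hcos ht.1 ht.2⟩
      · exact ⟨0, ⟨le_refl 0, hθ0.le⟩, by simp⟩
      · refine ⟨θ, ⟨hθ0.le, le_refl _⟩, ?_⟩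
        show Real.cos θ • x + Real.sin θ • v = y
        rw [hvdef, smul_smul, mul_inv_cancel₀ hsin, one_smul]
        abel
end
end

section
/- Let n ≥ 1 and let A ⊆ Sⁿ be a nonempty convex subset. Then the interior of A in the subspace topology of Sⁿ ∩ span(A) is nonempty, where span(A) is the linear span of A in ℝ^{n+1}. (Lemma 2.2 of the paper.) -/
open scoped RealInnerProductSpace

noncomputable section

/-! The cone `[0, ∞) • A` over a spherically convex set `A` is convex: a nonnegative combination
of two points `cos θᵢ • u + sin θᵢ • v` of an arc of length at most `π` is a nonnegative multiple
of a point of the arc between them, because in complex form `arg (p + q e^{iδ}) ∈ [0, δ]`.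
A convex set has nonempty interior in its affine span, which for this cone is `span A`.
Rescaling a nonzero interior point onto the sphere gives an interior point of `A`, since the cone
meets the sphere exactly in `A`. -/

open Real
open scoped Pointwise

namespace Complex

theorem arg_ofReal_add_mul_exp_le {p q δ : ℝ} (hp : 0 ≤ p) (hq : 0 ≤ q) (hδ : 0 ≤ δ) :
    arg (p + q * exp (δ * I)) ≤ δ := by
  set ζ : ℂ := p + q * exp (δ * I)
  rcases eq_or_ne ζ 0 with hζ | hζ
  · rwa [hζ, arg_zero]
  have hre : ζ.re = p + q * Real.cos δ := by simp [ζ, exp_ofReal_mul_I_re]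
  have hdist : |‖ζ‖ - q| ≤ p := by
    simpa [ζ, norm_exp_ofReal_mul_I, abs_of_nonneg hq, abs_of_nonneg hp]
      using abs_norm_sub_norm_le ζ (q * exp (δ * I))
  by_contra! hlt
  have hcos := Real.cos_lt_cos_of_nonneg_of_le_pi hδ (arg_le_pi ζ) hlt
  rw [cos_arg hζ, div_lt_iff₀ (norm_pos_iff.2 hζ)] at hcos
  have : (‖ζ‖ - q) * Real.cos δ ≤ p :=
    calc (‖ζ‖ - q) * Real.cos δ ≤ |‖ζ‖ - q| * |Real.cos δ| :=
          (le_abs_self _).trans (abs_mul _ _).le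
      _ ≤ p * 1 := mul_le_mul hdist (abs_cos_le_one δ) (abs_nonneg _) hp
      _ = p := mul_one p
  linarith

theorem exists_mem_Icc_add_eq_mul_exp {p q θ₁ θ₂ : ℝ} (hp : 0 ≤ p) (hq : 0 ≤ q)
    (h₁₂ : θ₁ ≤ θ₂) (h₂₁ : θ₂ ≤ θ₁ + π) :
    ∃ r : ℝ, 0 ≤ r ∧ ∃ θ ∈ Set.Icc θ₁ θ₂,
      (p * exp (θ₁ * I) + q * exp (θ₂ * I) : ℂ) = r * exp (θ * I) := by
  set ζ : ℂ := p + q * exp (((θ₂ - θ₁ : ℝ) : ℂ) * I)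
  have him : 0 ≤ ζ.im := by
    have : 0 ≤ Real.sin (θ₂ - θ₁) := sin_nonneg_of_nonneg_of_le_pi (by linarith) (by linarith)
    simpa only [ζ, add_im, ofReal_im, zero_add, im_ofReal_mul, exp_ofReal_mul_I_im]
      using mul_nonneg hq this
  refine ⟨‖ζ‖, norm_nonneg ζ, θ₁ + arg ζ, ⟨by linarith [arg_nonneg_iff.2 him], ?_⟩, ?_⟩
  · linarith [arg_ofReal_add_mul_exp_le hp hq (sub_nonneg.2 h₁₂)]
  · calc (p * exp (θ₁ * I) + q * exp (θ₂ * I) : ℂ) = exp (θ₁ * I) * ζ := by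
          simp only [ζ, mul_add, ← mul_assoc, mul_comm (exp _) (q : ℂ), mul_assoc (q : ℂ),
            ← exp_add]
          push_cast; ring_nf
      _ = exp (θ₁ * I) * (‖ζ‖ * exp (arg ζ * I)) := by rw [norm_mul_exp_arg_mul_I]
      _ = ‖ζ‖ * exp ((θ₁ + arg ζ : ℝ) * I) := by push_cast; rw [add_mul, exp_add]; ring

end Complex

theorem exists_mem_uIcc_add_eq_smul_cos_add_sin {E : Type*} [AddCommGroup E] [Module ℝ E]
    (u v : E) {p q θ₁ θ₂ : ℝ} (hp : 0 ≤ p) (hq : 0 ≤ q) (hθ : |θ₂ - θ₁| ≤ π) :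
    ∃ r : ℝ, 0 ≤ r ∧ ∃ θ ∈ Set.uIcc θ₁ θ₂,
      p • (Real.cos θ₁ • u + Real.sin θ₁ • v) + q • (Real.cos θ₂ • u + Real.sin θ₂ • v) =
        r • (Real.cos θ • u + Real.sin θ • v) := by
  wlog h₁₂ : θ₁ ≤ θ₂ generalizing p q θ₁ θ₂
  · obtain ⟨r, hr, θ, hθ', heq⟩ := this hq hp (by rwa [abs_sub_comm]) (le_of_not_ge h₁₂)
    exact ⟨r, hr, θ, Set.uIcc_comm θ₁ θ₂ ▸ hθ', by rw [add_comm, heq]⟩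
  obtain ⟨r, hr, θ, hθ', heq⟩ := Complex.exists_mem_Icc_add_eq_mul_exp hp hq h₁₂
    (by linarith [le_abs_self (θ₂ - θ₁)])
  have hre := congrArg Complex.re heq
  have him := congrArg Complex.im heq
  simp only [Complex.add_re, Complex.re_ofReal_mul, Complex.exp_ofReal_mul_I_re] at hre
  simp only [Complex.add_im, Complex.im_ofReal_mul, Complex.exp_ofReal_mul_I_im] at him
  refine ⟨r, hr, θ, Set.Icc_subset_uIcc hθ', ?_⟩
  calc _ = (p * Real.cos θ₁ + q * Real.cos θ₂) • u + (p * Real.sin θ₁ + q * Real.sin θ₂) • v :=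
        by module
    _ = _ := by rw [hre, him]; module

theorem SphConvex.convex_Ici_zero_smul {n : ℕ} {A : Set (Esp n)} (hc : SphConvex A) :
    Convex ℝ (Set.Ici (0 : ℝ) • A) := by
  rintro _ ⟨t₁, ht₁, x, hx, rfl⟩ _ ⟨t₂, ht₂, y, hy, rfl⟩ a b ha hb -
  obtain ⟨S, ⟨u, v, α, -, -, -, -, hαπ, rfl⟩, hSA, ⟨θ₁, hθ₁, rfl⟩, ⟨θ₂, hθ₂, rfl⟩⟩ := hc x hx y hy
  have hθ : |θ₂ - θ₁| ≤ π := by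
    rw [abs_le]; constructor <;> linarith [hθ₁.1, hθ₁.2, hθ₂.1, hθ₂.2]
  obtain ⟨r, hr, θ, hθ', heq⟩ := exists_mem_uIcc_add_eq_smul_cos_add_sin u v
    (mul_nonneg ha (Set.mem_Ici.1 ht₁)) (mul_nonneg hb (Set.mem_Ici.1 ht₂)) hθ
  refine ⟨r, hr, _, hSA ⟨θ, Set.uIcc_subset_Icc hθ₁ hθ₂ hθ', rfl⟩, ?_⟩
  simp only [smul_smul, heq]

section

variable {E : Type*} [NormedAddCommGroup E] [NormedSpace ℝ E]

theorem mem_of_smul_mem_Ici_zero_smul {A : Set E} (hA : A ⊆ {x | ‖x‖ = 1}) {c : ℝ} (hc : 0 < c)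
    {x : E} (hx : ‖x‖ = 1) (h : c • x ∈ Set.Ici (0 : ℝ) • A) : x ∈ A := by
  obtain ⟨t, ht, a, ha, hta⟩ := h
  have ha1 : ‖a‖ = 1 := hA ha
  have htc : t = c := by
    simpa [norm_smul, ha1, hx, abs_of_nonneg (Set.mem_Ici.1 ht), abs_of_pos hc]
      using congrArg norm hta
  subst htc
  rwa [← smul_right_injective E hc.ne' hta]

theorem exists_ne_zero_mem_interior_preimage_Ici_zero_smul [FiniteDimensional ℝ E] {A : Set E}
    {a : E} (ha : a ∈ A) (ha0 : a ≠ 0) (hconv : Convex ℝ (Set.Ici (0 : ℝ) • A)) :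
    ∃ q : Submodule.span ℝ A, q ≠ 0 ∧
      q ∈ interior ((Submodule.span ℝ A).subtype ⁻¹' (Set.Ici (0 : ℝ) • A)) := by
  set V := Submodule.span ℝ A
  set K : Set V := V.subtype ⁻¹' (Set.Ici (0 : ℝ) • A)
  have hK0 : (0 : V) ∈ K := ⟨0, Set.self_mem_Ici, a, ha, zero_smul ℝ a⟩
  have hspan : Submodule.span ℝ K = ⊤ := by
    have hAK : ((↑) : V → E) ⁻¹' A ⊆ K := fun x hx =>
      ⟨1, Set.mem_Ici.2 zero_le_one, x, hx, one_smul ℝ _⟩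
    exact eq_top_mono (Submodule.span_mono hAK) Submodule.span_span_coe_preimage
  have haff : affineSpan ℝ K = ⊤ := by
    rw [AffineSubspace.affineSpan_eq_top_iff_vectorSpan_eq_top_of_nonempty ℝ V V ⟨0, hK0⟩,
      vectorSpan_eq_span_vsub_set_right ℝ hK0]
    simpa using hspan
  have hint := ((hconv.linear_preimage V.subtype).interior_nonempty_iff_affineSpan_eq_top).2 haff
  have : Nontrivial V :=
    nontrivial_of_ne (⟨a, Submodule.subset_span ha⟩ : V) 0 (by simpa using ha0)
  obtain ⟨q, hq, hq0⟩ := (dense_compl_singleton (0 : V)).inter_open_nonempty _ isOpen_interior hint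
  exact ⟨q, hq0, hq⟩

theorem interior_preimage_sphere_inter_span_nonempty [FiniteDimensional ℝ E] {A : Set E}
    (hA : A ⊆ {x | ‖x‖ = 1}) (hne : A.Nonempty) (hconv : Convex ℝ (Set.Ici (0 : ℝ) • A)) :
    (interior (Subtype.val ⁻¹' A :
        Set ↥({x : E | ‖x‖ = 1} ∩ (Submodule.span ℝ A : Set E)))).Nonempty := by
  obtain ⟨a, ha⟩ := hne
  have ha0 : a ≠ 0 := by
    rintro rfl
    simpa using hA ha
  obtain ⟨q, hq0, hq⟩ := exists_ne_zero_mem_interior_preimage_Ici_zero_smul ha ha0 hconv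
  set K := (Submodule.span ℝ A).subtype ⁻¹' (Set.Ici (0 : ℝ) • A)
  have hq0' : (q : E) ≠ 0 := by simpa using hq0
  have hq_pos : 0 < ‖(q : E)‖ := norm_pos_iff.2 hq0'
  let f : ↥({x : E | ‖x‖ = 1} ∩ (Submodule.span ℝ A : Set E)) → Submodule.span ℝ A :=
    fun z => ‖(q : E)‖ • ⟨z, z.2.2⟩
  have hf : Continuous f := by fun_prop
  have hx₀ : ‖(q : E)‖⁻¹ • (q : E) ∈ {x : E | ‖x‖ = 1} ∩ (Submodule.span ℝ A : Set E) :=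
    ⟨norm_smul_inv_norm hq0', (Submodule.span ℝ A).smul_mem _ q.2⟩
  refine ⟨⟨_, hx₀⟩, mem_interior.2
    ⟨f ⁻¹' interior K, fun z hz => ?_, isOpen_interior.preimage hf, ?_⟩⟩
  · exact mem_of_smul_mem_Ici_zero_smul hA hq_pos z.2.1 (interior_subset (s := K) hz)
  · change f _ ∈ interior K
    convert hq
    ext
    simp [f, smul_smul, hq_pos.ne']

end

theorem sphConvex_relint_nonempty_general (n : ℕ) (A : Set (Esp n))
    (hA : A ⊆ sphereSet n) (hne : A.Nonempty) (hc : SphConvex A) :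
    (interior (Subtype.val ⁻¹' A :
        Set ↥(sphereSet n ∩ (Submodule.span ℝ A : Set (Esp n))))).Nonempty :=
  interior_preimage_sphere_inter_span_nonempty hA hne hc.convex_Ici_zero_smul

/-- Lemma 2.2: a nonempty convex subset `A` of `Sⁿ` has nonempty interior in
the subspace topology of `Sⁿ ∩ span(A)`. -/
theorem sphConvex_relint_nonempty (n : ℕ) (hn : 1 ≤ n) (A : Set (Esp n))
    (hA : A ⊆ sphereSet n) (hne : A.Nonempty) (hc : SphConvex A) :
    (interior (Subtype.val ⁻¹' A :
        Set ↥(sphereSet n ∩ (Submodule.span ℝ A : Set (Esp n))))).Nonempty :=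
  sphConvex_relint_nonempty_general n A hA hne hc
end
end

section
/- Let n ≥ 1 and let A ⊆ Sⁿ be a nonempty convex subset. Then either A = Sⁿ ∩ span(A) (i.e., A is a great sphere), or there exists a unit vector v ∈ span(A) such that ⟨x, v⟩ ≥ 0 for every x ∈ A; in the latter case A is contained in the m-hemisphere {x ∈ Sⁿ ∩ span(A) : ⟨x,v⟩ ≥ 0}, where m + 1 = dim span(A). (Theorem 2.3 of the paper: every convex set is a great sphere, a hemisphere, or a proper convex subset of a hemisphere of the great sphere it spans.) -/
open scoped RealInnerProductSpace

noncomputable section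

/-!
The rays through a convex `A ⊆ Sⁿ` already form a convex cone `K`: a nonnegative combination
of two points of a convex segment is a nonnegative multiple of a point of the segment between
them. If `K` is dense in `W = span A`, it is all of `W`, since a dense convex subset of a
finite-dimensional space is the whole space; then every unit vector of `W` lies in `A`.
Otherwise a point of `W` outside the closure of `K` is separated from `K` by a hyperplane, and
the orthogonal projection onto `W` of its normal is the pole of a hemisphere containing `A`.
-/
open Real Set

theorem cos_add_cos_pos {a b : ℝ} (ha : 0 ≤ a) (hb : 0 ≤ b) (hab : a + b < π) :
    0 < cos a + cos b := by
  have h : cos (π - a) < cos b := cos_lt_cos_of_nonneg_of_le_pi hb (by linarith) (by linarith)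
  rw [cos_pi_sub] at h
  linarith

theorem exists_mem_Icc_cos_sin_combo_of_lt_pi {s t l m : ℝ} (hst : s ≤ t) (hts : t - s < π)
    (hl : 0 ≤ l) (hm : 0 ≤ m) :
    ∃ θ ∈ Icc s t, ∃ c : ℝ, 0 ≤ c ∧
      l * cos s + m * cos t = c * cos θ ∧ l * sin s + m * sin t = c * sin θ := by
  set P := l * cos s + m * cos t
  set Q := l * sin s + m * sin t
  have hsin : 0 ≤ sin (t - s) := sin_nonneg_of_nonneg_of_le_pi (by linarith) hts.le
  -- `Q cos θ - P sin θ = 0` says that `(P, Q)` is parallel to `(cos θ, sin θ)`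
  obtain ⟨θ, hθ, hpar⟩ : (0 : ℝ) ∈ (fun θ => Q * cos θ - P * sin θ) '' Icc s t := by
    refine intermediate_value_Icc' hst (by fun_prop) ⟨?_, ?_⟩
    · have : Q * cos t - P * sin t = -(l * sin (t - s)) := by rw [sin_sub]; ring
      rw [this]; exact neg_nonpos.2 (mul_nonneg hl hsin)
    · have : Q * cos s - P * sin s = m * sin (t - s) := by rw [sin_sub]; ring
      rw [this]; exact mul_nonneg hm hsin
  set c := P * cos θ + Q * sin θ
  have hP : P = c * cos θ := by linear_combination (-sin θ) * hpar - P * sin_sq_add_cos_sq θ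
  have hQ : Q = c * sin θ := by linear_combination cos θ * hpar - Q * sin_sq_add_cos_sq θ
  refine ⟨θ, hθ, c, ?_, hP, hQ⟩
  have hsum : c * (cos (θ - s) + cos (t - θ)) = (l + m) * (1 + cos (t - s)) := by
    simp only [cos_sub]
    linear_combination (cos s + cos t) * hP.symm + (sin s + sin t) * hQ.symm
      + l * sin_sq_add_cos_sq s + m * sin_sq_add_cos_sq t
  have hpos : 0 < cos (θ - s) + cos (t - θ) :=
    cos_add_cos_pos (by linarith [hθ.1]) (by linarith [hθ.2]) (by linarith)
  have hrhs : 0 ≤ (l + m) * (1 + cos (t - s)) :=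
    mul_nonneg (by positivity) (by linarith [neg_one_le_cos (t - s)])
  exact (mul_nonneg_iff_of_pos_right hpos).1 (hsum ▸ hrhs)

theorem exists_mem_Icc_cos_sin_combo {s t l m : ℝ} (hst : s ≤ t) (hts : t - s ≤ π)
    (hl : 0 ≤ l) (hm : 0 ≤ m) :
    ∃ θ ∈ Icc s t, ∃ c : ℝ, 0 ≤ c ∧
      l * cos s + m * cos t = c * cos θ ∧ l * sin s + m * sin t = c * sin θ := by
  rcases hts.lt_or_eq with hlt | hπ
  · exact exists_mem_Icc_cos_sin_combo_of_lt_pi hst hlt hl hm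
  obtain rfl : t = s + π := by linarith
  rw [cos_add_pi, sin_add_pi]
  rcases le_total m l with h | h
  · exact ⟨s, left_mem_Icc.2 hst, l - m, sub_nonneg.2 h, by ring, by ring⟩
  · exact ⟨s + π, right_mem_Icc.2 hst, m - l, sub_nonneg.2 h, by rw [cos_add_pi]; ring,
      by rw [sin_add_pi]; ring⟩

theorem exists_smul_arc_add_smul_arc_eq {E : Type*} [AddCommGroup E] [Module ℝ E] (u v : E)
    {s t l m : ℝ} (hst : s ≤ t) (hts : t - s ≤ π) (hl : 0 ≤ l) (hm : 0 ≤ m) :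
    ∃ θ ∈ Icc s t, ∃ c : ℝ, 0 ≤ c ∧
      l • (cos s • u + sin s • v) + m • (cos t • u + sin t • v) = c • (cos θ • u + sin θ • v) := by
  obtain ⟨θ, hθ, c, hc, hP, hQ⟩ := exists_mem_Icc_cos_sin_combo hst hts hl hm
  refine ⟨θ, hθ, c, hc, ?_⟩
  calc l • (cos s • u + sin s • v) + m • (cos t • u + sin t • v)
      = (l * cos s + m * cos t) • u + (l * sin s + m * sin t) • v := by module
    _ = c • (cos θ • u + sin θ • v) := by rw [hP, hQ]; module

namespace SphConvex

variable {n : ℕ} {A : Set (Esp n)}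

theorem exists_smul_add_smul_eq (hc : SphConvex A) {x y : Esp n} (hx : x ∈ A) (hy : y ∈ A)
    {l m : ℝ} (hl : 0 ≤ l) (hm : 0 ≤ m) : ∃ c : ℝ, 0 ≤ c ∧ ∃ a ∈ A, l • x + m • y = c • a := by
  obtain ⟨S, ⟨u, v, a, -, -, -, -, ha, rfl⟩, hSA, ⟨s, hs, rfl⟩, ⟨t, ht, rfl⟩⟩ := hc x hx y hy
  have key : ∀ {s t l m : ℝ}, s ∈ Icc 0 a → t ∈ Icc 0 a → s ≤ t → 0 ≤ l → 0 ≤ m →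
      ∃ c : ℝ, 0 ≤ c ∧ ∃ b ∈ A,
        l • (cos s • u + sin s • v) + m • (cos t • u + sin t • v) = c • b := by
    intro s t l m hs ht hst hl hm
    obtain ⟨θ, hθ, c, hc, h⟩ :=
      exists_smul_arc_add_smul_arc_eq u v hst (by linarith [hs.1, ht.2]) hl hm
    exact ⟨c, hc, _, hSA ⟨θ, ⟨hs.1.trans hθ.1, hθ.2.trans ht.2⟩, rfl⟩, h⟩
  rcases le_total s t with h | h
  · exact key hs ht h hl hm
  · rw [add_comm]; exact key ht hs h hm hl

theorem eq_zero_or_exists_smul_of_mem_hull (hc : SphConvex A) {z : Esp n}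
    (hz : z ∈ PointedCone.hull ℝ A) : z = 0 ∨ ∃ c : ℝ, 0 ≤ c ∧ ∃ a ∈ A, z = c • a := by
  induction hz using Submodule.span_induction with
  | mem x hx => exact .inr ⟨1, zero_le_one, x, hx, (one_smul ℝ x).symm⟩
  | zero => exact .inl rfl
  | add x y _ _ hx hy =>
    rcases hx with rfl | ⟨c, hc0, a, ha, rfl⟩
    · rwa [zero_add]
    rcases hy with rfl | ⟨d, hd0, b, hb, rfl⟩
    · rw [add_zero]; exact .inr ⟨c, hc0, a, ha, rfl⟩
    · exact .inr (hc.exists_smul_add_smul_eq ha hb hc0 hd0)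
  | smul r x _ hx =>
    rcases hx with rfl | ⟨c, hc0, a, ha, rfl⟩
    · exact .inl (smul_zero r)
    · exact .inr ⟨r * c, mul_nonneg r.2 hc0, a, ha, by rw [← smul_smul]; rfl⟩

theorem mem_of_mem_hull_of_norm_eq_one (hA : A ⊆ sphereSet n) (hc : SphConvex A) {z : Esp n}
    (hz : z ∈ PointedCone.hull ℝ A) (hz1 : ‖z‖ = 1) : z ∈ A := by
  rcases hc.eq_zero_or_exists_smul_of_mem_hull hz with rfl | ⟨c, hc0, a, ha, rfl⟩
  · simp at hz1
  · rw [norm_smul, hA ha, mul_one, Real.norm_of_nonneg hc0] at hz1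
    rwa [hz1, one_smul]

end SphConvex

theorem Convex.eq_univ_of_dense {E : Type*} [NormedAddCommGroup E] [NormedSpace ℝ E]
    [FiniteDimensional ℝ E] {s : Set E} (hs : Convex ℝ s) (hd : Dense s) : s = univ := by
  have hspan : affineSpan ℝ s = ⊤ := by
    refine eq_top_iff.2 fun x _ => ?_
    have := (affineSpan ℝ s).closed_of_finiteDimensional.closure_subset_iff.2
      (subset_affineSpan ℝ s)
    exact this (hd.closure_eq ▸ mem_univ x)
  have hint := hs.interior_closure_eq_interior_of_nonempty_interior
    (hs.interior_nonempty_iff_affineSpan_eq_top.2 hspan)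
  rw [hd.closure_eq, interior_univ] at hint
  exact eq_univ_of_univ_subset (hint ▸ interior_subset)

theorem Convex.submodule_subset_of_subset_closure {E : Type*} [NormedAddCommGroup E]
    [NormedSpace ℝ E] [FiniteDimensional ℝ E] {s : Set E} (hs : Convex ℝ s) {W : Submodule ℝ E}
    (hsW : s ⊆ W) (hWs : (W : Set E) ⊆ closure s) : (W : Set E) ⊆ s := by
  have hconv : Convex ℝ (((↑) : W → E) ⁻¹' s) := hs.linear_preimage W.subtype
  have himage : ((↑) : W → E) '' (((↑) : W → E) ⁻¹' s) = s :=
    image_preimage_eq_of_subset (by simpa using hsW)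
  have hd : Dense (((↑) : W → E) ⁻¹' s) := fun w => by
    have hind : Topology.IsInducing ((↑) : W → E) := .subtypeVal
    rw [hind.closure_eq_preimage_closure_image, himage]
    exact hWs w.2
  intro w hw
  exact (hconv.eq_univ_of_dense hd).superset (mem_univ (⟨w, hw⟩ : W))

theorem PointedCone.coe_eq_span_or_exists_inner_nonneg {E : Type*} [NormedAddCommGroup E]
    [InnerProductSpace ℝ E] [FiniteDimensional ℝ E] (K : PointedCone ℝ E) :
    (K : Set E) = Submodule.span ℝ (K : Set E) ∨
      ∃ v ∈ Submodule.span ℝ (K : Set E), v ≠ 0 ∧ ∀ x ∈ K, 0 ≤ ⟪x, v⟫ := by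
  set W := Submodule.span ℝ (K : Set E)
  by_cases hdense : (W : Set E) ⊆ closure K
  · exact .inl (Submodule.subset_span.antisymm
      (K.convex.submodule_subset_of_subset_closure Submodule.subset_span hdense))
  obtain ⟨p, hpW, hpK⟩ := not_subset.1 hdense
  obtain ⟨y, hy, hpy⟩ := ProperCone.hyperplane_separation' (Submodule.closure K) hpK
  have hproj : ∀ x ∈ W, ⟪x, W.starProjection y⟫ = ⟪x, y⟫ := fun x hx => by
    rw [← W.inner_starProjection_left_eq_right, W.starProjection_eq_self_iff.2 hx]
  refine .inr ⟨W.starProjection y, W.starProjection_apply_mem y, fun h0 => ?_, fun x hx => ?_⟩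
  · have := hproj p hpW
    rw [h0, inner_zero_right] at this
    linarith
  · rw [hproj x (Submodule.subset_span hx)]
    exact hy x (subset_closure hx)

theorem sphConvex_classification_general (n : ℕ) (A : Set (Esp n))
    (hA : A ⊆ sphereSet n) (hc : SphConvex A) :
    A = sphereSet n ∩ (Submodule.span ℝ A : Set (Esp n)) ∨
      ∃ v : Esp n, ‖v‖ = 1 ∧ v ∈ Submodule.span ℝ A ∧
        (∀ x ∈ A, 0 ≤ ⟪x, v⟫) ∧
        A ⊆ {x ∈ sphereSet n ∩ (Submodule.span ℝ A : Set (Esp n)) | 0 ≤ ⟪x, v⟫} := by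
  have hspan : Submodule.span ℝ (PointedCone.hull ℝ A : Set (Esp n)) = Submodule.span ℝ A :=
    Submodule.span_span_of_tower _ _ _
  rcases (PointedCone.hull ℝ A).coe_eq_span_or_exists_inner_nonneg with hK | ⟨v, hvW, hv0, hv⟩
  · refine .inl (subset_antisymm (fun x hx => ⟨hA hx, Submodule.subset_span hx⟩) ?_)
    rintro x ⟨hx1, hxW⟩
    rw [← hspan, ← hK] at hxW
    exact hc.mem_of_mem_hull_of_norm_eq_one hA hxW hx1
  have hvA : ∀ x ∈ A, 0 ≤ ⟪x, ‖v‖⁻¹ • v⟫ := fun x hx => by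
    rw [real_inner_smul_right]
    exact mul_nonneg (by positivity) (hv x (PointedCone.subset_hull hx))
  refine .inr ⟨‖v‖⁻¹ • v, norm_smul_inv_norm hv0, Submodule.smul_mem _ _ (hspan ▸ hvW), hvA,
    fun x hx => ⟨⟨hA hx, Submodule.subset_span hx⟩, hvA x hx⟩⟩

/-- Theorem 2.3 (classification of convex sets): a nonempty convex subset `A`
of `Sⁿ` either equals the great sphere `Sⁿ ∩ span(A)`, or there is a unit
vector `v ∈ span(A)` with `⟨x, v⟩ ≥ 0` for all `x ∈ A`; in the latter case
`A` is contained in the hemisphere `{x ∈ Sⁿ ∩ span(A) : ⟨x, v⟩ ≥ 0}`. -/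
theorem sphConvex_classification (n : ℕ) (hn : 1 ≤ n) (A : Set (Esp n))
    (hA : A ⊆ sphereSet n) (hne : A.Nonempty) (hc : SphConvex A) :
    A = sphereSet n ∩ (Submodule.span ℝ A : Set (Esp n)) ∨
      ∃ v : Esp n, ‖v‖ = 1 ∧ v ∈ Submodule.span ℝ A ∧
        (∀ x ∈ A, 0 ≤ ⟪x, v⟫) ∧
        A ⊆ {x ∈ sphereSet n ∩ (Submodule.span ℝ A : Set (Esp n)) | 0 ≤ ⟪x, v⟫} :=
  sphConvex_classification_general n A hA hc
end
end

section
/- Let n ≥ 1 and let A ⊆ Sⁿ be a nonempty compact convex subset containing no pair of antipodal points (i.e., x ∈ A implies −x ∉ A). Then there exists a unit vector v ∈ ℝ^{n+1} such that ⟨x, v⟩ > 0 for every x ∈ A; that is, A is contained in an open hemisphere of Sⁿ. (The simply convex case of Theorem 2.4 of the paper.) -/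
open scoped RealInnerProductSpace

noncomputable section

/-!
Any two points of `A` lie on an arc `t ↦ cos t • u + sin t • v`, `t ∈ [0, a]`, `a ≤ π`, inside
`A`. Identifying the plane of the arc with `ℂ`, a nonnegative combination of two points of the arc
again has argument in `[0, a]`, so it is a positive multiple of a point of the arc. Since `A` has
no antipodal pairs such a combination vanishes only trivially; hence the positive multiples of
points of `A` form a convex set avoiding `0`, and `0 ∉ convexHull ℝ A`. By Carathéodory this
hull is compact, and separating it from `0` (Hahn–Banach) gives `v`.
-/

open Real Set Complex

theorem eq_zero_and_eq_zero_of_smul_add_smul_eq_zero {E : Type*} [NormedAddCommGroup E]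
    [NormedSpace ℝ E] {x y : E} {α β : ℝ} (hx : ‖x‖ = 1) (hy : ‖y‖ = 1) (hxy : y ≠ -x)
    (hα : 0 ≤ α) (hβ : 0 ≤ β) (h : α • x + β • y = 0) : α = 0 ∧ β = 0 := by
  have hβα : β = α := by
    have := congrArg norm (eq_neg_of_add_eq_zero_right h)
    rwa [norm_neg, norm_smul, norm_smul, hx, hy, Real.norm_of_nonneg hα,
      Real.norm_of_nonneg hβ, mul_one, mul_one] at this
  subst hβα
  rw [← smul_add, smul_eq_zero] at h
  exact h.elim (fun hβ => ⟨hβ, hβ⟩) fun hsum => absurd (eq_neg_of_add_eq_zero_right hsum) hxy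

theorem Complex.arg_le_of_cos_mul_im_le_sin_mul_re {a : ℝ} {z : ℂ} (ha : 0 < a)
    (h : Real.cos a * z.im ≤ Real.sin a * z.re) : arg z ≤ a := by
  by_contra! hlt
  have hz : 0 < ‖z‖ := norm_pos_iff.2 fun hz => by rw [hz, arg_zero] at hlt; linarith
  have hsin : 0 < Real.sin (arg z - a) :=
    sin_pos_of_pos_of_lt_pi (by linarith) (by linarith [arg_le_pi z])
  have hrot : ‖z‖ * Real.sin (arg z - a) = Real.cos a * z.im - Real.sin a * z.re := by
    rw [Real.sin_sub, ← norm_mul_sin_arg, ← norm_mul_cos_arg]; ring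
  linarith [mul_pos hz hsin]

theorem Complex.arg_smul_exp_add_smul_exp_mem_Icc {a t₁ t₂ α β : ℝ} (ht₁ : t₁ ∈ Icc 0 a)
    (ht₂ : t₂ ∈ Icc 0 a) (ha : a ≤ π) (hα : 0 ≤ α) (hβ : 0 ≤ β) :
    arg (α • exp (t₁ * I) + β • exp (t₂ * I)) ∈ Icc 0 a := by
  set z := α • exp (t₁ * I) + β • exp (t₂ * I)
  have hre : z.re = α * Real.cos t₁ + β * Real.cos t₂ := by simp [z, exp_ofReal_mul_I_re]
  have him : z.im = α * Real.sin t₁ + β * Real.sin t₂ := by simp [z, exp_ofReal_mul_I_im]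
  have hsin₁ := sin_nonneg_of_nonneg_of_le_pi ht₁.1 (ht₁.2.trans ha)
  have hsin₂ := sin_nonneg_of_nonneg_of_le_pi ht₂.1 (ht₂.2.trans ha)
  refine ⟨arg_nonneg_iff.2 (by rw [him]; positivity), ?_⟩
  rcases (ht₁.1.trans ht₁.2).eq_or_lt with rfl | ha₀
  · obtain rfl : t₁ = 0 := le_antisymm ht₁.2 ht₁.1
    obtain rfl : t₂ = 0 := le_antisymm ht₂.2 ht₂.1
    have : z = ((α + β : ℝ) : ℂ) := by simp [z, Complex.real_smul]
    rw [this, arg_ofReal_of_nonneg (add_nonneg hα hβ)]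
  · have hsector : Real.sin a * z.re - Real.cos a * z.im =
        α * Real.sin (a - t₁) + β * Real.sin (a - t₂) := by
      rw [hre, him, Real.sin_sub, Real.sin_sub]; ring
    have h₁ := sin_nonneg_of_nonneg_of_le_pi (sub_nonneg.2 ht₁.2) (by linarith [ht₁.1])
    have h₂ := sin_nonneg_of_nonneg_of_le_pi (sub_nonneg.2 ht₂.2) (by linarith [ht₂.1])
    exact arg_le_of_cos_mul_im_le_sin_mul_re ha₀
      (by linarith [mul_nonneg hα h₁, mul_nonneg hβ h₂])

theorem exists_pos_smul_mem_arc {E : Type*} [AddCommGroup E] [Module ℝ E] {u v x y : E}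
    {a α β : ℝ} (ha : a ≤ π)
    (hx : x ∈ (fun t : ℝ => Real.cos t • u + Real.sin t • v) '' Icc 0 a)
    (hy : y ∈ (fun t : ℝ => Real.cos t • u + Real.sin t • v) '' Icc 0 a)
    (hα : 0 ≤ α) (hβ : 0 ≤ β) (hne : α • x + β • y ≠ 0) :
    ∃ r : ℝ, 0 < r ∧
      r • (α • x + β • y) ∈ (fun t : ℝ => Real.cos t • u + Real.sin t • v) '' Icc 0 a := by
  let L : ℂ →ₗ[ℝ] E := reLm.smulRight u + imLm.smulRight v
  have harc (t : ℝ) : Real.cos t • u + Real.sin t • v = L (exp (t * I)) := by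
    simp [L, exp_ofReal_mul_I_re, exp_ofReal_mul_I_im]
  obtain ⟨t₁, ht₁, rfl⟩ := hx
  obtain ⟨t₂, ht₂, rfl⟩ := hy
  set z := α • exp (t₁ * I) + β • exp (t₂ * I)
  have hLz : α • L (exp (t₁ * I)) + β • L (exp (t₂ * I)) = L z := by
    simp only [z, map_add, map_smul]
  simp only [harc, hLz] at hne ⊢
  have hz : z ≠ 0 := fun hz => hne (by rw [hz, map_zero])
  refine ⟨‖z‖⁻¹, by positivity, arg z, arg_smul_exp_add_smul_exp_mem_Icc ht₁ ht₂ ha hα hβ, ?_⟩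
  have hpolar : L z = ‖z‖ • L (exp (arg z * I)) := by
    rw [← map_smul, Complex.real_smul, norm_mul_exp_arg_mul_I]
  rw [hpolar, smul_smul, inv_mul_cancel₀ (norm_ne_zero_iff.2 hz), one_smul]

theorem SphConvex.convex_setOf_exists_pos_smul_mem {n : ℕ} {A : Set (Esp n)} (hc : SphConvex A)
    (hA : A ⊆ sphereSet n) (hanti : ∀ x ∈ A, -x ∉ A) :
    Convex ℝ {z | ∃ r : ℝ, 0 < r ∧ r • z ∈ A} := by
  rintro z ⟨p, hp, hpA⟩ w ⟨q, hq, hqA⟩ a b ha hb hab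
  obtain ⟨S, ⟨u, v, c, -, -, -, -, hcπ, rfl⟩, hSA, hpS, hqS⟩ := hc _ hpA _ hqA
  have hcomb : (a / p) • (p • z) + (b / q) • (q • w) = a • z + b • w := by
    rw [smul_smul, smul_smul, div_mul_cancel₀ _ hp.ne', div_mul_cancel₀ _ hq.ne']
  have hne : (a / p) • (p • z) + (b / q) • (q • w) ≠ 0 := fun h => by
    obtain ⟨ha₀, hb₀⟩ := eq_zero_and_eq_zero_of_smul_add_smul_eq_zero (hA hpA) (hA hqA)
      (fun hneg => hanti _ hpA (hneg ▸ hqA)) (by positivity) (by positivity) h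
    linarith [(div_eq_zero_iff.1 ha₀).resolve_right hp.ne',
      (div_eq_zero_iff.1 hb₀).resolve_right hq.ne']
  obtain ⟨r, hr, hrS⟩ := exists_pos_smul_mem_arc hcπ hpS hqS (by positivity) (by positivity) hne
  exact ⟨r, hr, hcomb ▸ hSA hrS⟩

theorem SphConvex.zero_notMem_convexHull {n : ℕ} {A : Set (Esp n)} (hc : SphConvex A)
    (hA : A ⊆ sphereSet n) (hanti : ∀ x ∈ A, -x ∉ A) : (0 : Esp n) ∉ convexHull ℝ A := by
  intro h0
  have hsub : A ⊆ {z | ∃ r : ℝ, 0 < r ∧ r • z ∈ A} := fun x hx =>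
    ⟨1, one_pos, by rwa [one_smul]⟩
  obtain ⟨r, -, hr⟩ := convexHull_min hsub (hc.convex_setOf_exists_pos_smul_mem hA hanti) h0
  rw [smul_zero] at hr
  simpa [sphereSet] using hA hr

theorem convexHull_eq_biUnion_image_stdSimplex {E : Type*} [AddCommGroup E] [Module ℝ E]
    [FiniteDimensional ℝ E] (s : Set E) :
    convexHull ℝ s = ⋃ m ∈ Finset.range (Module.finrank ℝ E + 2),
      (fun p : (Fin m → ℝ) × (Fin m → E) => ∑ i, p.1 i • p.2 i) ''
        (stdSimplex ℝ (Fin m) ×ˢ univ.pi fun _ => s) := by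
  refine Subset.antisymm (fun x hx => ?_) ?_
  · obtain ⟨ι, _, z, w, hzs, hind, hw, hw₁, rfl⟩ := eq_pos_convex_span_of_mem_convexHull hx
    have hcard : Fintype.card ι ≤ Module.finrank ℝ E + 1 :=
      hind.card_le_finrank_succ.trans (Nat.succ_le_succ (Submodule.finrank_le _))
    let e := Fintype.equivFin ι
    refine mem_biUnion (x := Fintype.card ι) (Finset.mem_range.2 (by omega))
      ⟨(w ∘ e.symm, z ∘ e.symm),
        ⟨⟨fun i => (hw _).le, ?_⟩, fun i _ => hzs (mem_range_self _)⟩, ?_⟩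
    · simpa [e.symm.sum_comp w] using hw₁
    · simp [e.symm.sum_comp fun i => w i • z i]
  · simp only [iUnion_subset_iff]
    rintro m - _ ⟨⟨w, z⟩, ⟨hw, hz⟩, rfl⟩
    exact mem_convexHull_of_exists_fintype w z hw.1 hw.2 (fun i => hz i (mem_univ i)) rfl

theorem IsCompact.convexHull {E : Type*} [NormedAddCommGroup E] [NormedSpace ℝ E]
    [FiniteDimensional ℝ E] {s : Set E} (hs : IsCompact s) : IsCompact (convexHull ℝ s) := by
  rw [convexHull_eq_biUnion_image_stdSimplex]
  exact Finset.isCompact_biUnion _ fun m _ =>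
    ((isCompact_stdSimplex _ _).prod (isCompact_univ_pi fun _ => hs)).image (by fun_prop)

theorem exists_norm_eq_one_inner_pos_of_zero_notMem_convexHull {E : Type*}
    [NormedAddCommGroup E] [InnerProductSpace ℝ E] [CompleteSpace E] {s : Set E}
    (hs : IsClosed (convexHull ℝ s)) (hne : s.Nonempty) (h0 : 0 ∉ convexHull ℝ s) :
    ∃ v : E, ‖v‖ = 1 ∧ ∀ x ∈ s, 0 < ⟪x, v⟫ := by
  obtain ⟨f, c, hf0, hfs⟩ := geometric_hahn_banach_point_closed (convex_convexHull ℝ s) hs h0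
  set w := (InnerProductSpace.toDual ℝ E).symm f
  have hw : ∀ x ∈ s, 0 < ⟪x, w⟫ := fun x hx => by
    rw [real_inner_comm, InnerProductSpace.toDual_symm_apply]
    linarith [map_zero f, hfs x (subset_convexHull ℝ s hx)]
  obtain ⟨x₀, hx₀⟩ := hne
  have hw0 : w ≠ 0 := fun h => by simpa [h] using hw x₀ hx₀
  refine ⟨‖w‖⁻¹ • w, norm_smul_inv_norm hw0, fun x hx => ?_⟩
  rw [real_inner_smul_right]
  exact mul_pos (inv_pos.2 (norm_pos_iff.2 hw0)) (hw x hx)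

theorem sphConvex_no_antipodal_open_hemisphere_general (n : ℕ)
    (A : Set (Esp n)) (hA : A ⊆ sphereSet n) (hne : A.Nonempty)
    (hcpt : IsCompact A) (hc : SphConvex A)
    (hanti : ∀ x ∈ A, -x ∉ A) :
    ∃ v : Esp n, ‖v‖ = 1 ∧ ∀ x ∈ A, 0 < ⟪x, v⟫ :=
  exists_norm_eq_one_inner_pos_of_zero_notMem_convexHull hcpt.convexHull.isClosed hne
    (hc.zero_notMem_convexHull hA hanti)

/-- Theorem 2.4 (simply convex case): a nonempty compact convex subset of `Sⁿ`
containing no pair of antipodal points lies in an open hemisphere. -/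
theorem sphConvex_no_antipodal_open_hemisphere (n : ℕ) (hn : 1 ≤ n)
    (A : Set (Esp n)) (hA : A ⊆ sphereSet n) (hne : A.Nonempty)
    (hcpt : IsCompact A) (hc : SphConvex A)
    (hanti : ∀ x ∈ A, -x ∉ A) :
    ∃ v : Esp n, ‖v‖ = 1 ∧ ∀ x ∈ A, 0 < ⟪x, v⟫ :=
  sphConvex_no_antipodal_open_hemisphere_general n A hA hne hcpt hc hanti
end
end

section
/- Let n ≥ 2 and let K ⊆ Sⁿ be a compact convex subset that contains some (n−1)-hemisphere. Then K is one of the following: Sⁿ itself; a great (n−1)-sphere; an (n−1)-hemisphere; an n-hemisphere; or an n-bihedron. (Lemma 2.5 of the paper, with the degenerate case K equal to the (n−1)-hemisphere itself included.) -/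
open scoped RealInnerProductSpace

noncomputable section

/-- A great `i`-sphere in `Sⁿ`: the intersection of `Sⁿ` with an
`(i+1)`-dimensional linear subspace. -/
def IsGreatSphere {n : ℕ} (i : ℕ) (S : Set (Esp n)) : Prop :=
  ∃ V : Submodule ℝ (Esp n), Module.finrank ℝ V = i + 1 ∧
    S = sphereSet n ∩ (V : Set (Esp n))

/-- An `i`-hemisphere in `Sⁿ`: `{x ∈ Sⁿ ∩ V : ⟨x, v⟩ ≥ 0}` for an
`(i+1)`-dimensional subspace `V` and a unit vector `v ∈ V`. -/
def IsHemisphere {n : ℕ} (i : ℕ) (S : Set (Esp n)) : Prop :=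
  ∃ (V : Submodule ℝ (Esp n)) (v : Esp n), Module.finrank ℝ V = i + 1 ∧
    ‖v‖ = 1 ∧ v ∈ V ∧
    S = {x ∈ sphereSet n ∩ (V : Set (Esp n)) | 0 ≤ ⟪x, v⟫}

/-- An `n`-bihedron: `{x ∈ Sⁿ : ⟨x, u⟩ ≥ 0 ∧ ⟨x, w⟩ ≥ 0}` for linearly
independent `u, w`. -/
def IsBihedron {n : ℕ} (S : Set (Esp n)) : Prop :=
  ∃ u w : Esp n, LinearIndependent ℝ ![u, w] ∧
    S = {x ∈ sphereSet n | 0 ≤ ⟪x, u⟫ ∧ 0 ≤ ⟪x, w⟫}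

/-!
Write the given `(n-1)`-hemisphere as `H = {x ∈ Sⁿ | ⟪x, w⟫ = 0, ⟪x, v⟫ ≥ 0}` with `v, w`
orthonormal. A unit vector `x` off the great circle through `v` and `w` lies on a short arc from
its normalised projection to the plane of `v, w` to a point `m` with `±m ∈ H`, so by convexity
`x ∈ K` iff that projection is in `K`: `K` is determined by its trace on the circle.

Measured by angle from `v`, this trace is the arc `[-β, α]`, possibly together with `-v`, where
`α, β ≤ π` are the lengths of the longest arcs from `v` in `K` towards `w` and `-w`. Convexity and
closedness leave three cases: `α + β > π`, and `K = Sⁿ`; `α = β = 0`, and `K` is the great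
`(n-1)`-sphere `w⊥` or `H` itself according as `-v ∈ K` or not; `0 < α + β ≤ π`, and `K` is cut
out by the normals of the two ends of the arc, an `n`-hemisphere if `α + β = π` and an
`n`-bihedron otherwise.
-/
open Real Set

section GreatCircle

variable {E : Type*} [NormedAddCommGroup E] [InnerProductSpace ℝ E]

def greatCircleMap (v w : E) (θ : ℝ) : E := cos θ • v + sin θ • w

@[simp]
lemma greatCircleMap_zero (v w : E) : greatCircleMap v w 0 = v := by
  simp [greatCircleMap]

@[simp]
lemma greatCircleMap_pi (v w : E) : greatCircleMap v w π = -v := by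
  simp [greatCircleMap]

lemma greatCircleMap_neg_right (v w : E) (θ : ℝ) :
    greatCircleMap v (-w) θ = greatCircleMap v w (-θ) := by
  simp [greatCircleMap]

lemma greatCircleMap_add_two_pi (v w : E) (θ : ℝ) :
    greatCircleMap v w (θ + 2 * π) = greatCircleMap v w θ := by
  simp [greatCircleMap]

lemma continuous_greatCircleMap (v w : E) : Continuous (greatCircleMap v w) := by
  unfold greatCircleMap
  fun_prop

lemma sin_sub_smul_greatCircleMap (v w : E) (θ₁ θ₂ r : ℝ) :
    sin (θ₂ - θ₁) • greatCircleMap v w r =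
      sin (θ₂ - r) • greatCircleMap v w θ₁ + sin (r - θ₁) • greatCircleMap v w θ₂ := by
  have hcos : sin (θ₂ - θ₁) * cos r = sin (θ₂ - r) * cos θ₁ + sin (r - θ₁) * cos θ₂ := by
    simp only [sin_sub]; ring
  have hsin : sin (θ₂ - θ₁) * sin r = sin (θ₂ - r) * sin θ₁ + sin (r - θ₁) * sin θ₂ := by
    simp only [sin_sub]; ring
  simp only [greatCircleMap, smul_add, smul_smul, hcos, hsin, add_smul]
  abel

variable {v w : E}

lemma norm_smul_add_smul_sq (hv : ‖v‖ = 1) (hw : ‖w‖ = 1) (hvw : ⟪v, w⟫ = 0) (c d : ℝ) :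
    ‖c • v + d • w‖ ^ 2 = c ^ 2 + d ^ 2 := by
  rw [norm_add_sq_real, norm_smul, norm_smul, real_inner_smul_left, real_inner_smul_right,
    hvw, hv, hw]
  simp [sq_abs]

lemma norm_smul_add_smul_eq_one (hv : ‖v‖ = 1) (hw : ‖w‖ = 1) (hvw : ⟪v, w⟫ = 0) {c d : ℝ}
    (h : c ^ 2 + d ^ 2 = 1) : ‖c • v + d • w‖ = 1 := by
  rw [← pow_eq_one_iff_of_nonneg (norm_nonneg _) two_ne_zero, norm_smul_add_smul_sq hv hw hvw, h]

lemma norm_greatCircleMap (hv : ‖v‖ = 1) (hw : ‖w‖ = 1) (hvw : ⟪v, w⟫ = 0) (θ : ℝ) :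
    ‖greatCircleMap v w θ‖ = 1 :=
  norm_smul_add_smul_eq_one hv hw hvw (cos_sq_add_sin_sq θ)

lemma inner_greatCircleMap_left (hv : ‖v‖ = 1) (hvw : ⟪v, w⟫ = 0) (θ : ℝ) :
    ⟪greatCircleMap v w θ, v⟫ = cos θ := by
  rw [greatCircleMap, inner_add_left, real_inner_smul_left, real_inner_smul_left,
    real_inner_self_eq_norm_sq, hv, real_inner_comm, hvw]
  ring

lemma inner_greatCircleMap_right (hw : ‖w‖ = 1) (hvw : ⟪v, w⟫ = 0) (θ : ℝ) :
    ⟪greatCircleMap v w θ, w⟫ = sin θ := by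
  rw [greatCircleMap, inner_add_left, real_inner_smul_left, real_inner_smul_left,
    real_inner_self_eq_norm_sq, hw, hvw]
  ring

lemma greatCircleMap_ne_of_inner_eq_zero (hv : ‖v‖ = 1) (hw : ‖w‖ = 1) (hvw : ⟪v, w⟫ = 0)
    {z : E} (hzv : ⟪z, v⟫ = 0) (hzw : ⟪z, w⟫ = 0) (θ : ℝ) : greatCircleMap v w θ ≠ z := by
  rintro rfl
  rw [inner_greatCircleMap_left hv hvw] at hzv
  rw [inner_greatCircleMap_right hw hvw] at hzw
  simpa [hzv, hzw] using cos_sq_add_sin_sq θ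

end GreatCircle

/-- The cross product `C sin r - D cos r` changes sign on `[s, t]`; at a zero `r`,
`(C, D) = ±(cos r, sin r)`, and the midpoint of the arc fixes the sign. -/
lemma exists_mem_Icc_cos_sin_eq {s t a b : ℝ} (ha : 0 < a) (hb : 0 < b) (hst : s ≤ t)
    (hts : t - s < π) (hunit : (a * cos s + b * cos t) ^ 2 + (a * sin s + b * sin t) ^ 2 = 1) :
    ∃ r ∈ Icc s t, a * cos s + b * cos t = cos r ∧ a * sin s + b * sin t = sin r := by
  set C := a * cos s + b * cos t
  set D := a * sin s + b * sin t
  have hsin : 0 ≤ sin (t - s) := sin_nonneg_of_nonneg_of_le_pi (by linarith) (by linarith)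
  have hzero : (0 : ℝ) ∈ Icc (C * sin s - D * cos s) (C * sin t - D * cos t) := by
    constructor
    · nlinarith [show C * sin s - D * cos s = -(b * sin (t - s)) by simp only [C, D, sin_sub]; ring]
    · nlinarith [show C * sin t - D * cos t = a * sin (t - s) by simp only [C, D, sin_sub]; ring]
  obtain ⟨r, hr, hcross⟩ := intermediate_value_Icc hst
    (f := fun r ↦ C * sin r - D * cos r) (by fun_prop) hzero
  replace hcross : C * sin r - D * cos r = 0 := hcross
  set k := C * cos r + D * sin r
  have hC : C = k * cos r := by linear_combination sin r * hcross - C * sin_sq_add_cos_sq r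
  have hD : D = k * sin r := by linear_combination -cos r * hcross - D * sin_sq_add_cos_sq r
  have hsq : k ^ 2 = 1 := by
    rw [← hunit, hC, hD]; linear_combination -k ^ 2 * sin_sq_add_cos_sq r
  set m := (s + t) / 2 with hm
  have hmid : C * cos m + D * sin m = (a + b) * cos ((t - s) / 2) := by
    have hs : cos (s - m) = cos ((t - s) / 2) := by rw [← cos_neg]; congr 1; ring
    have ht : cos (t - m) = cos ((t - s) / 2) := by congr 1; ring
    rw [cos_sub] at hs ht
    linear_combination a * hs + b * ht
  have hpos : 0 < k * cos (r - m) := by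
    have : 0 < cos ((t - s) / 2) := cos_pos_of_mem_Ioo ⟨by linarith [pi_pos], by linarith⟩
    have : k * cos (r - m) = C * cos m + D * sin m := by rw [cos_sub, hC, hD]; ring
    rw [this, hmid]; positivity
  have hk : k = 1 := by
    have : 0 < cos (r - m) := cos_pos_of_mem_Ioo ⟨by linarith [hr.1], by linarith [hr.2]⟩
    have : 0 < k := pos_of_mul_pos_left hpos this.le
    nlinarith
  exact ⟨r, hr, by rw [hC, hk, one_mul], by rw [hD, hk, one_mul]⟩

section SphConvex

variable {n : ℕ} {K : Set (Esp n)}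

lemma mem_sphereSet {x : Esp n} : x ∈ sphereSet n ↔ ‖x‖ = 1 := Iff.rfl

lemma SphConvex.smul_add_smul_mem (hK : SphConvex K) {x y : Esp n} (hx : x ∈ K) (hy : y ∈ K)
    (hxy : y ≠ -x) {a b : ℝ} (ha : 0 < a) (hb : 0 < b) (hab : ‖a • x + b • y‖ = 1) :
    a • x + b • y ∈ K := by
  obtain ⟨S, ⟨u, u', c, hu, hu', huu', -, hcπ, rfl⟩, hSK, ⟨s, hs, rfl⟩, ⟨t, ht, rfl⟩⟩ :=
    hK x hx y hy
  wlog hst : s ≤ t generalizing s t a b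
  · rw [add_comm]
    exact this hb ha t ht hy s hs hx (fun h ↦ hxy (by rw [h, neg_neg]))
      (by simpa only [add_comm] using hab) (le_of_not_ge hst)
  have hts : t - s < π := by
    refine lt_of_le_of_ne (by linarith [hs.1, ht.2]) fun hπ ↦ hxy ?_
    obtain ⟨rfl, rfl⟩ : s = 0 ∧ t = π := ⟨by linarith [hs.1, ht.2], by linarith [hs.1, ht.2]⟩
    simp
  have hcomb : a • (cos s • u + sin s • u') + b • (cos t • u + sin t • u') =
      (a * cos s + b * cos t) • u + (a * sin s + b * sin t) • u' := by module
  rw [hcomb] at hab ⊢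
  obtain ⟨r, hr, hcos, hsin⟩ := exists_mem_Icc_cos_sin_eq ha hb hst hts
    (by rw [← norm_smul_add_smul_sq hu hu' huu', hab, one_pow])
  exact hSK ⟨r, ⟨hs.1.trans hr.1, hr.2.trans ht.2⟩, by rw [hcos, hsin]⟩

lemma SphConvex.greatCircleMap_mem (hK : SphConvex K) {v w : Esp n} (hv : ‖v‖ = 1)
    (hw : ‖w‖ = 1) (hvw : ⟪v, w⟫ = 0) {θ₁ θ₂ : ℝ} (h₁ : greatCircleMap v w θ₁ ∈ K)
    (h₂ : greatCircleMap v w θ₂ ∈ K) (hlt : θ₂ - θ₁ < π) {r : ℝ} (hr : r ∈ Icc θ₁ θ₂) :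
    greatCircleMap v w r ∈ K := by
  rcases hr.1.eq_or_lt with rfl | h₁r
  · exact h₁
  rcases hr.2.eq_or_lt with rfl | hr₂
  · exact h₂
  have hΔ : 0 < sin (θ₂ - θ₁) := sin_pos_of_pos_of_lt_pi (by linarith) hlt
  have hcomb : greatCircleMap v w r =
      (sin (θ₂ - r) / sin (θ₂ - θ₁)) • greatCircleMap v w θ₁ +
        (sin (r - θ₁) / sin (θ₂ - θ₁)) • greatCircleMap v w θ₂ := by
    rw [div_eq_inv_mul, div_eq_inv_mul, mul_smul, mul_smul, ← smul_add,
      ← sin_sub_smul_greatCircleMap, inv_smul_smul₀ hΔ.ne']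
  have hne : greatCircleMap v w θ₂ ≠ -greatCircleMap v w θ₁ := by
    intro h
    have hcos := congrArg (⟪·, greatCircleMap v w θ₁⟫) h
    simp only [inner_neg_left, real_inner_self_eq_norm_sq, norm_greatCircleMap hv hw hvw] at hcos
    rw [greatCircleMap, inner_add_left, real_inner_smul_left, real_inner_smul_left,
      real_inner_comm, inner_greatCircleMap_left hv hvw, real_inner_comm,
      inner_greatCircleMap_right hw hvw, ← cos_sub] at hcos
    have := cos_lt_cos_of_nonneg_of_le_pi (by linarith) le_rfl hlt
    rw [cos_pi] at this
    linarith
  rw [hcomb]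
  refine hK.smul_add_smul_mem h₁ h₂ hne
    (div_pos (sin_pos_of_pos_of_lt_pi (by linarith) (by linarith)) hΔ)
    (div_pos (sin_pos_of_pos_of_lt_pi (by linarith) (by linarith)) hΔ) ?_
  rw [← hcomb, norm_greatCircleMap hv hw hvw]

lemma SphConvex.mem_iff_of_eq_smul_add_smul (hK : SphConvex K) {x u m : Esp n}
    (hm : m ∈ K) (hm' : -m ∈ K) (hxm : x ≠ m) (hum : u ≠ -m) (hx : ‖x‖ = 1)
    (hu : ‖u‖ = 1) {a b : ℝ} (ha : 0 < a) (hb : 0 < b) (hxu : x = a • u + b • m) :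
    x ∈ K ↔ u ∈ K := by
  constructor
  · intro hxK
    have hux : u = a⁻¹ • x + (a⁻¹ * b) • -m := by
      rw [hxu, smul_add, smul_smul, inv_mul_cancel₀ ha.ne', one_smul]
      module
    rw [hux] at hu ⊢
    exact hK.smul_add_smul_mem hxK hm' (fun h ↦ hxm (neg_injective h).symm) (inv_pos.2 ha)
      (by positivity) hu
  · intro huK
    rw [hxu] at hx ⊢
    exact hK.smul_add_smul_mem huK hm (fun h ↦ hum (by rw [h, neg_neg])) ha hb hx

end SphConvex

section ArcAngle

variable {E : Type*} [NormedAddCommGroup E] [InnerProductSpace ℝ E] {K : Set E} {v w : E}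

/-- The supremum runs over whole arcs `[0, θ]` in `K`, not over single points: a great sphere `K`
meets the circle in `{v, -v}`. -/
def arcAngle (K : Set E) (v w : E) : ℝ :=
  sSup {θ ∈ Icc 0 π | ∀ s ∈ Icc 0 θ, greatCircleMap v w s ∈ K}

lemma zero_mem_arcAngle_set (hvK : v ∈ K) :
    0 ∈ {θ ∈ Icc 0 π | ∀ s ∈ Icc 0 θ, greatCircleMap v w s ∈ K} := by
  refine ⟨⟨le_rfl, pi_pos.le⟩, fun s hs ↦ ?_⟩
  rwa [le_antisymm hs.2 hs.1, greatCircleMap_zero]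

lemma bddAbove_arcAngle_set :
    BddAbove {θ ∈ Icc 0 π | ∀ s ∈ Icc 0 θ, greatCircleMap v w s ∈ K} :=
  ⟨π, fun _ hθ ↦ hθ.1.2⟩

lemma arcAngle_nonneg (hvK : v ∈ K) : 0 ≤ arcAngle K v w :=
  le_csSup bddAbove_arcAngle_set (zero_mem_arcAngle_set hvK)

lemma arcAngle_le_pi (hvK : v ∈ K) : arcAngle K v w ≤ π :=
  csSup_le ⟨0, zero_mem_arcAngle_set hvK⟩ fun _ hθ ↦ hθ.1.2

lemma greatCircleMap_mem_of_le_arcAngle (hK : IsClosed K) (hvK : v ∈ K) {θ : ℝ} (h₀ : 0 ≤ θ)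
    (hθ : θ ≤ arcAngle K v w) : greatCircleMap v w θ ∈ K := by
  have hIco : Ico 0 (arcAngle K v w) ⊆ greatCircleMap v w ⁻¹' K := fun s hs ↦ by
    obtain ⟨θ', hθ', hsθ'⟩ := exists_lt_of_lt_csSup ⟨0, zero_mem_arcAngle_set hvK⟩ hs.2
    exact hθ'.2 s ⟨hs.1, hsθ'.le⟩
  rcases (arcAngle_nonneg hvK).eq_or_lt with h | h
  · rwa [le_antisymm (h ▸ hθ) h₀, greatCircleMap_zero]
  · have hcl : IsClosed (greatCircleMap v w ⁻¹' K) :=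
      hK.preimage (continuous_greatCircleMap v w)
    exact hcl.closure_subset_iff.mpr hIco (by rw [closure_Ico h.ne]; exact ⟨h₀, hθ⟩)

lemma neg_mem_of_arcAngle_eq_pi (hK : IsClosed K) (hvK : v ∈ K) (hπ : arcAngle K v w = π) :
    -v ∈ K := by
  simpa using greatCircleMap_mem_of_le_arcAngle (w := w) hK hvK pi_pos.le hπ.ge

end ArcAngle

section ArcAngleSphConvex

variable {n : ℕ} {K : Set (Esp n)} {v w : Esp n}

lemma le_arcAngle (hK : SphConvex K) (hv : ‖v‖ = 1) (hw : ‖w‖ = 1) (hvw : ⟪v, w⟫ = 0)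
    (hvK : v ∈ K) {θ : ℝ} (h₀ : 0 ≤ θ) (hπ : θ < π) (hθK : greatCircleMap v w θ ∈ K) :
    θ ≤ arcAngle K v w :=
  le_csSup bddAbove_arcAngle_set ⟨⟨h₀, hπ.le⟩, fun _ hs ↦
    hK.greatCircleMap_mem hv hw hvw (by rwa [greatCircleMap_zero]) hθK (by linarith) hs⟩

lemma arcAngle_eq_pi (hK : SphConvex K) (hcl : IsClosed K) (hv : ‖v‖ = 1) (hw : ‖w‖ = 1)
    (hvw : ⟪v, w⟫ = 0) (hvK : v ∈ K) (hneg : -v ∈ K) (hpos : 0 < arcAngle K v w) :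
    arcAngle K v w = π := by
  have hαK := greatCircleMap_mem_of_le_arcAngle (w := w) hcl hvK hpos.le le_rfl
  refine (arcAngle_le_pi hvK).antisymm (le_csSup bddAbove_arcAngle_set
    ⟨⟨pi_pos.le, le_rfl⟩, fun s hs ↦ ?_⟩)
  rcases le_total s (arcAngle K v w) with h | h
  · exact greatCircleMap_mem_of_le_arcAngle hcl hvK hs.1 h
  · exact hK.greatCircleMap_mem hv hw hvw hαK (by rwa [greatCircleMap_pi]) (by linarith) ⟨h, hs.2⟩

end ArcAngleSphConvex

lemma exists_pos_mul_cos_mul_sin {c d : ℝ} (h : c ≠ 0 ∨ d ≠ 0) :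
    ∃ R > 0, ∃ θ ∈ Ioc (-π) π, c = R * cos θ ∧ d = R * sin θ := by
  let z : ℂ := ⟨c, d⟩
  have hz : z ≠ 0 := fun hz ↦ by
    rcases h with h | h
    · exact h (congrArg Complex.re hz)
    · exact h (congrArg Complex.im hz)
  exact ⟨‖z‖, norm_pos_iff.2 hz, z.arg, z.arg_mem_Ioc, z.norm_mul_cos_arg.symm,
    z.norm_mul_sin_arg.symm⟩

structure ConvexOverHemisphere {n : ℕ} (K : Set (Esp n)) (v w : Esp n) : Prop where
  subset_sphereSet : K ⊆ sphereSet n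
  sphConvex : SphConvex K
  norm_left : ‖v‖ = 1
  norm_right : ‖w‖ = 1
  inner_eq_zero : ⟪v, w⟫ = 0
  hemisphere_subset : {x ∈ sphereSet n | ⟪x, w⟫ = 0 ∧ 0 ≤ ⟪x, v⟫} ⊆ K

namespace ConvexOverHemisphere

variable {n : ℕ} {K : Set (Esp n)} {v w : Esp n}

lemma left_mem (h : ConvexOverHemisphere K v w) : v ∈ K :=
  h.hemisphere_subset ⟨h.norm_left, h.inner_eq_zero, by
    rw [real_inner_self_eq_norm_sq, h.norm_left]; norm_num⟩

lemma neg_right (h : ConvexOverHemisphere K v w) : ConvexOverHemisphere K v (-w) where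
  subset_sphereSet := h.subset_sphereSet
  sphConvex := h.sphConvex
  norm_left := h.norm_left
  norm_right := by rw [norm_neg, h.norm_right]
  inner_eq_zero := by rw [inner_neg_right, h.inner_eq_zero, neg_zero]
  hemisphere_subset x hx := h.hemisphere_subset (by simpa using hx)

/-- The normalised component `m` of `x` orthogonal to the plane of `v, w` satisfies `±m ∈ H ⊆ K`,
and `x` lies on the short arc from `greatCircleMap v w θ` to `m`. -/
lemma mem_iff_greatCircleMap_mem (h : ConvexOverHemisphere K v w) {x : Esp n} (hx : ‖x‖ = 1)
    {R θ : ℝ} (hR : 0 < R) (hxv : ⟪x, v⟫ = R * cos θ) (hxw : ⟪x, w⟫ = R * sin θ) :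
    x ∈ K ↔ greatCircleMap v w θ ∈ K := by
  have hv := h.norm_left
  have hw := h.norm_right
  have hvw := h.inner_eq_zero
  set u := greatCircleMap v w θ
  set y := x - R • u
  have hyv : ⟪y, v⟫ = 0 := by
    simp only [y, u, inner_sub_left, real_inner_smul_left, inner_greatCircleMap_left hv hvw, hxv,
      sub_self]
  have hyw : ⟪y, w⟫ = 0 := by
    simp only [y, u, inner_sub_left, real_inner_smul_left, inner_greatCircleMap_right hw hvw, hxw,
      sub_self]
  by_cases hy : y = 0
  · have hxu : x = R • u := sub_eq_zero.1 hy
    have hR1 : R = 1 := by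
      rwa [hxu, norm_smul, norm_greatCircleMap hv hw hvw, mul_one, Real.norm_of_nonneg hR.le]
        at hx
    rw [hxu, hR1, one_smul]
  set m := ‖y‖⁻¹ • y
  have hmv : ⟪m, v⟫ = 0 := by rw [real_inner_smul_left, hyv, mul_zero]
  have hmw : ⟪m, w⟫ = 0 := by rw [real_inner_smul_left, hyw, mul_zero]
  have hm : ‖m‖ = 1 := norm_smul_inv_norm hy
  have hmK : m ∈ K := h.hemisphere_subset ⟨hm, hmw, hmv.ge⟩
  have hm'K : -m ∈ K := h.hemisphere_subset
    ⟨by rwa [mem_sphereSet, norm_neg], by rw [inner_neg_left, hmw, neg_zero],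
      by rw [inner_neg_left, hmv, neg_zero]⟩
  have hxm : x ≠ m := by
    intro hxm
    rw [hxm, hmv, eq_comm, mul_eq_zero, or_iff_right hR.ne'] at hxv
    rw [hxm, hmw, eq_comm, mul_eq_zero, or_iff_right hR.ne'] at hxw
    simpa [hxv, hxw] using cos_sq_add_sin_sq θ
  have hxu : x = R • u + ‖y‖ • m := by
    rw [smul_smul, mul_inv_cancel₀ (norm_ne_zero_iff.2 hy), one_smul, add_sub_cancel]
  refine h.sphConvex.mem_iff_of_eq_smul_add_smul hmK hm'K hxm
    (greatCircleMap_ne_of_inner_eq_zero hv hw hvw ?_ ?_ θ) hx (norm_greatCircleMap hv hw hvw θ) hR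
    (norm_pos_iff.2 hy) hxu
  · rw [inner_neg_left, hmv, neg_zero]
  · rw [inner_neg_left, hmw, neg_zero]

lemma eq_setOf_of_forall_greatCircleMap_mem_iff (h : ConvexOverHemisphere K v w)
    (P : ℝ → ℝ → Prop) (hP₀ : P 0 0)
    (hP : ∀ R > 0, ∀ θ, P (R * cos θ) (R * sin θ) ↔ P (cos θ) (sin θ))
    (hcircle : ∀ θ ∈ Ioc (-π) π, greatCircleMap v w θ ∈ K ↔ P (cos θ) (sin θ)) :
    K = {x ∈ sphereSet n | P ⟪x, v⟫ ⟪x, w⟫} := by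
  ext x
  by_cases hx : ‖x‖ = 1
  swap
  · exact ⟨fun hxK ↦ absurd (h.subset_sphereSet hxK) hx, fun hx' ↦ absurd hx'.1 hx⟩
  simp only [mem_ofPred_eq, mem_sphereSet, hx, true_and]
  by_cases h₀ : ⟪x, v⟫ = 0 ∧ ⟪x, w⟫ = 0
  · rw [h₀.1, h₀.2]
    exact iff_of_true (h.hemisphere_subset ⟨hx, h₀.2, h₀.1.ge⟩) hP₀
  obtain ⟨R, hR, θ, hθ, hc, hd⟩ := exists_pos_mul_cos_mul_sin (not_and_or.1 h₀)
  rw [h.mem_iff_greatCircleMap_mem hx hR hc hd, hcircle θ hθ, hc, hd, hP R hR θ]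

end ConvexOverHemisphere

lemma eq_zero_or_eq_pi_of_sin_nonpos {x : ℝ} (h₀ : 0 ≤ x) (hπ : x ≤ π) (hsin : sin x ≤ 0) :
    x = 0 ∨ x = π := by
  by_contra! hx
  exact hsin.not_gt (sin_pos_of_pos_of_lt_pi (h₀.lt_of_ne' hx.1) (hπ.lt_of_ne hx.2))

lemma sin_sub_nonneg_and_sin_add_nonneg_iff {a b θ : ℝ} (ha : 0 ≤ a) (hb : 0 ≤ b)
    (hab : a + b ≤ π) (hθ : θ ∈ Ioo (-π) π) :
    0 ≤ sin (a - θ) ∧ 0 ≤ sin (b + θ) ↔ -b ≤ θ ∧ θ ≤ a := by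
  obtain ⟨hθ₁, hθ₂⟩ := hθ
  constructor
  · rintro ⟨h₁, h₂⟩
    constructor
    · by_contra! h
      exact h₂.not_gt (sin_neg_of_neg_of_neg_pi_lt (by linarith) (by linarith))
    · by_contra! h
      exact h₁.not_gt (sin_neg_of_neg_of_neg_pi_lt (by linarith) (by linarith))
  · rintro ⟨h₁, h₂⟩
    exact ⟨sin_nonneg_of_nonneg_of_le_pi (by linarith) (by linarith),
      sin_nonneg_of_nonneg_of_le_pi (by linarith) (by linarith)⟩

namespace ConvexOverHemisphere

variable {n : ℕ} {K : Set (Esp n)} {v w : Esp n}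

protected lemma le_arcAngle (h : ConvexOverHemisphere K v w) {θ : ℝ} (h₀ : 0 ≤ θ) (hπ : θ < π)
    (hθK : greatCircleMap v w θ ∈ K) : θ ≤ arcAngle K v w :=
  _root_.le_arcAngle h.sphConvex h.norm_left h.norm_right h.inner_eq_zero h.left_mem h₀ hπ hθK

lemma greatCircleMap_mem_iff (h : ConvexOverHemisphere K v w) (hcl : IsClosed K) {θ : ℝ}
    (hθ : θ ∈ Ioo (-π) π) :
    greatCircleMap v w θ ∈ K ↔ -arcAngle K v (-w) ≤ θ ∧ θ ≤ arcAngle K v w := by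
  have hα := arcAngle_nonneg (w := w) h.left_mem
  have hβ := arcAngle_nonneg (w := -w) h.left_mem
  rcases le_or_gt 0 θ with h₀ | h₀
  · refine ⟨fun hθK ↦ ⟨by linarith, h.le_arcAngle h₀ hθ.2 hθK⟩, fun hθ' ↦ ?_⟩
    exact greatCircleMap_mem_of_le_arcAngle hcl h.left_mem h₀ hθ'.2
  · rw [← neg_neg θ, ← greatCircleMap_neg_right]
    refine ⟨fun hθK ↦ ⟨?_, by linarith⟩, fun hθ' ↦ ?_⟩
    · linarith [h.neg_right.le_arcAngle (by linarith) (by linarith [hθ.1]) hθK]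
    · exact greatCircleMap_mem_of_le_arcAngle hcl h.left_mem (by linarith) (by linarith [hθ'.1])

/-- Otherwise the arcs from `v` of lengths `arcAngle K v w` and `arcAngle K v (-w)` in the two
directions have endpoints closer than `π` around `-v`, and convexity puts `-v` into `K`. -/
lemma add_arcAngle_le_pi (h : ConvexOverHemisphere K v w) (hcl : IsClosed K) (hneg : -v ∉ K) :
    arcAngle K v w + arcAngle K v (-w) ≤ π := by
  by_contra! hsum
  have hlt : ∀ {w' : Esp n}, arcAngle K v w' < π := fun {w'} ↦
    (arcAngle_le_pi h.left_mem).lt_of_ne fun hπ ↦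
      hneg (neg_mem_of_arcAngle_eq_pi hcl h.left_mem hπ)
  have h₁ : greatCircleMap v w (arcAngle K v w) ∈ K :=
    greatCircleMap_mem_of_le_arcAngle hcl h.left_mem (arcAngle_nonneg h.left_mem) le_rfl
  have h₂ : greatCircleMap v w (-arcAngle K v (-w) + 2 * π) ∈ K := by
    rw [greatCircleMap_add_two_pi, ← greatCircleMap_neg_right]
    exact greatCircleMap_mem_of_le_arcAngle hcl h.left_mem (arcAngle_nonneg h.left_mem) le_rfl
  have := h.sphConvex.greatCircleMap_mem h.norm_left h.norm_right h.inner_eq_zero h₁ h₂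
    (by linarith) (r := π) ⟨by linarith [@hlt w], by linarith [@hlt (-w)]⟩
  exact hneg (by rwa [greatCircleMap_pi] at this)

lemma arcAngle_eq_zero_or_eq_pi (h : ConvexOverHemisphere K v w) (hcl : IsClosed K)
    (hneg : -v ∈ K) : arcAngle K v w = 0 ∨ arcAngle K v w = π :=
  (arcAngle_nonneg h.left_mem).eq_or_lt.imp Eq.symm
    (arcAngle_eq_pi h.sphConvex hcl h.norm_left h.norm_right h.inner_eq_zero h.left_mem hneg)

lemma eq_sphereSet_of_pi_lt_add (h : ConvexOverHemisphere K v w) (hcl : IsClosed K)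
    (hsum : π < arcAngle K v w + arcAngle K v (-w)) : K = sphereSet n := by
  have hneg : -v ∈ K := by_contra fun hneg ↦ (h.add_arcAngle_le_pi hcl hneg).not_gt hsum
  have hα := arcAngle_le_pi (w := w) h.left_mem
  have hβ := arcAngle_le_pi (w := -w) h.left_mem
  have hα' := h.arcAngle_eq_zero_or_eq_pi hcl hneg
  have hβ' := h.neg_right.arcAngle_eq_zero_or_eq_pi hcl hneg
  rw [h.eq_setOf_of_forall_greatCircleMap_mem_iff (fun _ _ ↦ True) trivial (fun _ _ _ ↦ Iff.rfl)
    fun θ hθ ↦ iff_true_intro ?_, sep_true]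
  rcases hθ.2.eq_or_lt with rfl | hθπ
  · rwa [greatCircleMap_pi]
  · refine (h.greatCircleMap_mem_iff hcl ⟨hθ.1, hθπ⟩).2 ⟨?_, ?_⟩
    · rcases hβ' with hβ' | hβ' <;> rcases hα' with hα' | hα' <;> linarith [hθ.1]
    · rcases hβ' with hβ' | hβ' <;> rcases hα' with hα' | hα' <;> linarith

lemma eq_setOf_inner_eq_zero (h : ConvexOverHemisphere K v w) (hcl : IsClosed K)
    (hneg : -v ∈ K) (hα : arcAngle K v w = 0) (hβ : arcAngle K v (-w) = 0) :
    K = {x ∈ sphereSet n | ⟪x, w⟫ = 0} := by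
  refine h.eq_setOf_of_forall_greatCircleMap_mem_iff (fun _ d ↦ d = 0) rfl
    (fun R hR θ ↦ by simp [hR.ne']) fun θ hθ ↦ ?_
  rcases hθ.2.eq_or_lt with rfl | hθπ
  · simpa using hneg
  · rw [h.greatCircleMap_mem_iff hcl ⟨hθ.1, hθπ⟩, hα, hβ, neg_zero,
      sin_eq_zero_iff_of_lt_of_lt hθ.1 hθπ, le_antisymm_iff, and_comm]

lemma eq_setOf_inner_eq_zero_and_nonneg (h : ConvexOverHemisphere K v w) (hcl : IsClosed K)
    (hneg : -v ∉ K) (hα : arcAngle K v w = 0) (hβ : arcAngle K v (-w) = 0) :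
    K = {x ∈ sphereSet n | ⟪x, w⟫ = 0 ∧ 0 ≤ ⟪x, v⟫} := by
  refine h.eq_setOf_of_forall_greatCircleMap_mem_iff (fun c d ↦ d = 0 ∧ 0 ≤ c) ⟨rfl, le_rfl⟩
    (fun R hR θ ↦ by simp [hR.ne', mul_nonneg_iff_of_pos_left hR]) fun θ hθ ↦ ?_
  rcases hθ.2.eq_or_lt with rfl | hθπ
  · norm_num [hneg]
  · rw [h.greatCircleMap_mem_iff hcl ⟨hθ.1, hθπ⟩, hα, hβ, neg_zero,
      sin_eq_zero_iff_of_lt_of_lt hθ.1 hθπ]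
    constructor
    · rintro ⟨h₁, h₂⟩
      obtain rfl := le_antisymm h₂ h₁
      simp
    · rintro ⟨rfl, -⟩
      simp

lemma eq_setOf_inner_nonneg (h : ConvexOverHemisphere K v w) (hcl : IsClosed K)
    (hpos : 0 < arcAngle K v w + arcAngle K v (-w))
    (hle : arcAngle K v w + arcAngle K v (-w) ≤ π) :
    K = {x ∈ sphereSet n | 0 ≤ ⟪x, sin (arcAngle K v w) • v - cos (arcAngle K v w) • w⟫ ∧
      0 ≤ ⟪x, sin (arcAngle K v (-w)) • v + cos (arcAngle K v (-w)) • w⟫} := by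
  set α := arcAngle K v w
  set β := arcAngle K v (-w)
  have hα₀ : 0 ≤ α := arcAngle_nonneg h.left_mem
  have hβ₀ : 0 ≤ β := arcAngle_nonneg h.left_mem
  have hscale : ∀ {R : ℝ}, 0 < R → ∀ θ p q : ℝ,
      0 ≤ p * (R * cos θ) + q * (R * sin θ) ↔ 0 ≤ p * cos θ + q * sin θ := fun {R} hR θ p q ↦ by
    rw [show p * (R * cos θ) + q * (R * sin θ) = R * (p * cos θ + q * sin θ) by ring,
      mul_nonneg_iff_of_pos_left hR]
  have hK := h.eq_setOf_of_forall_greatCircleMap_mem_iff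
    (fun c d ↦ 0 ≤ sin α * c + -cos α * d ∧ 0 ≤ sin β * c + cos β * d) (by simp)
    (fun R hR θ ↦ by simp only [hscale hR]) fun θ hθ ↦ ?_
  · rw [hK]
    ext x
    simp only [mem_ofPred_eq, inner_sub_right, inner_add_right, real_inner_smul_right, neg_mul,
      ← sub_eq_add_neg]
  rcases hθ.2.eq_or_lt with rfl | hθπ
  · simp only [greatCircleMap_pi, cos_pi, sin_pi, mul_neg_one, mul_zero, add_zero,
      neg_nonneg]
    constructor
    · intro hneg
      rcases h.arcAngle_eq_zero_or_eq_pi hcl hneg with hα | hα <;>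
        rcases h.neg_right.arcAngle_eq_zero_or_eq_pi hcl hneg with hβ | hβ <;>
        simp [α, β, hα, hβ]
    · rintro ⟨hsα, hsβ⟩
      rcases eq_zero_or_eq_pi_of_sin_nonpos hα₀ (arcAngle_le_pi h.left_mem) hsα with hα | hα
      · rcases eq_zero_or_eq_pi_of_sin_nonpos hβ₀ (arcAngle_le_pi h.left_mem) hsβ with hβ | hβ
        · linarith
        · exact neg_mem_of_arcAngle_eq_pi hcl h.left_mem hβ
      · exact neg_mem_of_arcAngle_eq_pi hcl h.left_mem hα
  · rw [h.greatCircleMap_mem_iff hcl ⟨hθ.1, hθπ⟩, neg_mul, ← sub_eq_add_neg, ← sin_sub,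
      ← sin_add]
    exact (sin_sub_nonneg_and_sin_add_nonneg_iff hα₀ hβ₀ hle ⟨hθ.1, hθπ⟩).symm

end ConvexOverHemisphere

section Shapes

variable {n : ℕ}

lemma exists_norm_eq_one_and_eq_orthogonal (V : Submodule ℝ (Esp n))
    (hV : Module.finrank ℝ V = n) : ∃ w : Esp n, ‖w‖ = 1 ∧ V = (ℝ ∙ w)ᗮ := by
  have hVperp : Module.finrank ℝ Vᗮ = 1 := by
    have := V.finrank_add_finrank_orthogonal
    rw [hV, finrank_euclideanSpace_fin] at this
    omega
  obtain ⟨w₀, hw₀, hw₀0⟩ := Submodule.exists_mem_ne_zero_of_ne_bot (p := Vᗮ) fun h ↦ by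
    rw [← Submodule.finrank_eq_zero] at h
    omega
  have hw : ‖‖w₀‖⁻¹ • w₀‖ = 1 := norm_smul_inv_norm hw₀0
  refine ⟨_, hw, Submodule.eq_of_le_of_finrank_eq (fun x hx ↦ ?_) ?_⟩
  · exact Submodule.mem_orthogonal_singleton_iff_inner_right.2
      (Submodule.inner_left_of_mem_orthogonal hx (Vᗮ.smul_mem _ hw₀))
  · have : Fact (Module.finrank ℝ (Esp n) = n + 1) := ⟨finrank_euclideanSpace_fin⟩
    rw [hV, Submodule.finrank_orthogonal_span_singleton (n := n)
      (ne_zero_of_norm_ne_zero (by rw [hw]; exact one_ne_zero))]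

lemma IsHemisphere.exists_eq_setOf (hn : 1 ≤ n) {H : Set (Esp n)} (hH : IsHemisphere (n - 1) H) :
    ∃ v w : Esp n, ‖v‖ = 1 ∧ ‖w‖ = 1 ∧ ⟪v, w⟫ = 0 ∧
      H = {x ∈ sphereSet n | ⟪x, w⟫ = 0 ∧ 0 ≤ ⟪x, v⟫} := by
  obtain ⟨V, v, hV, hv, hvV, rfl⟩ := hH
  obtain ⟨w, hw, rfl⟩ := exists_norm_eq_one_and_eq_orthogonal V (by omega)
  refine ⟨v, w, hv, hw, ?_, ?_⟩
  · rw [real_inner_comm]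
    exact Submodule.mem_orthogonal_singleton_iff_inner_right.1 hvV
  · ext x
    simp [Submodule.mem_orthogonal_singleton_iff_inner_right, real_inner_comm, and_assoc]

lemma isGreatSphere_setOf_inner_eq_zero (hn : 1 ≤ n) {w : Esp n} (hw : w ≠ 0) :
    IsGreatSphere (n - 1) {x ∈ sphereSet n | ⟪x, w⟫ = 0} := by
  have : Fact (Module.finrank ℝ (Esp n) = n + 1) := ⟨finrank_euclideanSpace_fin⟩
  refine ⟨(ℝ ∙ w)ᗮ, by rw [Submodule.finrank_orthogonal_span_singleton (n := n) hw]; omega, ?_⟩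
  ext x
  simp [Submodule.mem_orthogonal_singleton_iff_inner_right, real_inner_comm]

lemma isHemisphere_setOf_inner_nonneg {u : Esp n} (hu : ‖u‖ = 1) :
    IsHemisphere n {x ∈ sphereSet n | 0 ≤ ⟪x, u⟫} :=
  ⟨⊤, u, by rw [finrank_top, finrank_euclideanSpace_fin], hu, Submodule.mem_top, by ext; simp⟩

variable {v w : Esp n}

lemma isHemisphere_of_add_eq_pi (hv : ‖v‖ = 1) (hw : ‖w‖ = 1) (hvw : ⟪v, w⟫ = 0) {a b : ℝ}
    (hab : a + b = π) :
    IsHemisphere n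
      {x ∈ sphereSet n | 0 ≤ ⟪x, sin a • v - cos a • w⟫ ∧ 0 ≤ ⟪x, sin b • v + cos b • w⟫} := by
  obtain rfl : b = π - a := by linarith
  simp only [sin_pi_sub, cos_pi_sub, neg_smul, ← sub_eq_add_neg, and_self]
  refine isHemisphere_setOf_inner_nonneg ?_
  rw [sub_eq_add_neg, ← neg_smul]
  exact norm_smul_add_smul_eq_one hv hw hvw (by rw [neg_sq, sin_sq_add_cos_sq])

lemma isBihedron_of_sin_add_ne_zero (hv : ‖v‖ = 1) (hw : ‖w‖ = 1) (hvw : ⟪v, w⟫ = 0)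
    {a b : ℝ} (hab : sin (a + b) ≠ 0) :
    IsBihedron
      {x ∈ sphereSet n | 0 ≤ ⟪x, sin a • v - cos a • w⟫ ∧ 0 ≤ ⟪x, sin b • v + cos b • w⟫} := by
  refine ⟨_, _, LinearIndependent.pair_iff.2 fun s t hst ↦ ?_, rfl⟩
  have hwv : ⟪w, v⟫ = 0 := by rw [real_inner_comm, hvw]
  have hcv := congrArg (⟪·, v⟫) hst
  have hcw := congrArg (⟪·, w⟫) hst
  simp only [inner_add_left, inner_sub_left, real_inner_smul_left, real_inner_self_eq_norm_sq,
    hv, hw, hvw, hwv, inner_zero_left] at hcv hcw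
  rw [sin_add] at hab
  constructor
  · refine (mul_eq_zero.1 (?_ : s * (sin a * cos b + cos a * sin b) = 0)).resolve_right hab
    linear_combination cos b * hcv - sin b * hcw
  · refine (mul_eq_zero.1 (?_ : t * (sin a * cos b + cos a * sin b) = 0)).resolve_right hab
    linear_combination cos a * hcv + sin a * hcw

end Shapes

/-- Lemma 2.5: a compact convex subset of `Sⁿ` containing an
`(n-1)`-hemisphere is `Sⁿ`, a great `(n-1)`-sphere, an `(n-1)`-hemisphere,
an `n`-hemisphere, or an `n`-bihedron. -/
theorem sphConvex_contains_hemisphere_classification (n : ℕ) (hn : 2 ≤ n)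
    (K : Set (Esp n)) (hK : K ⊆ sphereSet n) (hcpt : IsCompact K)
    (hc : SphConvex K) (hhemi : ∃ H, IsHemisphere (n - 1) H ∧ H ⊆ K) :
    K = sphereSet n ∨ IsGreatSphere (n - 1) K ∨ IsHemisphere (n - 1) K ∨
      IsHemisphere n K ∨ IsBihedron K := by
  obtain ⟨H, hH, hHK⟩ := hhemi
  obtain ⟨v, w, hv, hw, hvw, hHeq⟩ := hH.exists_eq_setOf (by omega)
  have h : ConvexOverHemisphere K v w := ⟨hK, hc, hv, hw, hvw, hHeq ▸ hHK⟩
  have hcl := hcpt.isClosed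
  have hα := arcAngle_nonneg (w := w) h.left_mem
  have hβ := arcAngle_nonneg (w := -w) h.left_mem
  rcases lt_or_ge π (arcAngle K v w + arcAngle K v (-w)) with hsum | hsum
  · exact Or.inl (h.eq_sphereSet_of_pi_lt_add hcl hsum)
  rcases (add_nonneg hα hβ).eq_or_lt with h₀ | hpos
  · obtain ⟨hα₀, hβ₀⟩ : arcAngle K v w = 0 ∧ arcAngle K v (-w) = 0 :=
      ⟨by linarith, by linarith⟩
    by_cases hneg : -v ∈ K
    · rw [h.eq_setOf_inner_eq_zero hcl hneg hα₀ hβ₀]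
      exact Or.inr <| Or.inl <| isGreatSphere_setOf_inner_eq_zero (by omega)
        (ne_zero_of_norm_ne_zero (by rw [hw]; exact one_ne_zero))
    · rw [h.eq_setOf_inner_eq_zero_and_nonneg hcl hneg hα₀ hβ₀, ← hHeq]
      exact Or.inr <| Or.inr <| Or.inl hH
  rw [h.eq_setOf_inner_nonneg hcl hpos hsum]
  rcases hsum.eq_or_lt with hπ | hlt
  · exact Or.inr <| Or.inr <| Or.inr <| Or.inl <| isHemisphere_of_add_eq_pi hv hw hvw hπ
  · exact Or.inr <| Or.inr <| Or.inr <| Or.inr <|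
      isBihedron_of_sin_add_ne_zero hv hw hvw (sin_pos_of_pos_of_lt_pi hpos hlt).ne'
end
end

section
/- Let n ≥ 1 and let A ⊆ Sⁿ be a convex subset with A ≠ Sⁿ. For every point x in the frontier of A taken in the subspace topology of Sⁿ ∩ span(A), there exists a unit vector v ∈ ℝ^{n+1} with ⟨v, x⟩ = 0 and ⟨v, a⟩ ≥ 0 for all a ∈ A; that is, the great (n−1)-sphere {y ∈ Sⁿ : ⟨v,y⟩ = 0} is a supporting hypersphere for A at x. (Theorem 2.7 of the paper.) -/
/-
The nonnegative multiples of a spherically convex set `A` form a convex cone: two points of `A`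
lie on an arc of length at most `π`, and the planar sector spanned by such an arc is convex.
Adding the orthogonal complement of `span A` yields a convex cone `D` with nonempty interior
whose unit vectors inside `span A` are exactly the points of `A`. Hence a frontier point `x` of
`A` relative to `Sⁿ ∩ span A` lies in the closure of `D` but not in its interior, and
Hahn–Banach gives a functional that is nonnegative on `D` and, `D` being a cone, vanishes at `x`.
Its Riesz representative, normalised, is the vector `v`.
-/

open scoped RealInnerProductSpace

noncomputable section

open Set Real Pointwise

theorem exists_polar_mem_Icc {a α β : ℝ} (ha : 0 < a) (hβ : 0 ≤ β)
    (h : β * cos a ≤ α * sin a) :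
    ∃ ρ : ℝ, 0 ≤ ρ ∧ ∃ τ ∈ Icc 0 a, ρ * cos τ = α ∧ ρ * sin τ = β := by
  set z : ℂ := ⟨α, β⟩
  have hre : ‖z‖ * cos z.arg = α := Complex.norm_mul_cos_arg z
  have him : ‖z‖ * sin z.arg = β := Complex.norm_mul_sin_arg z
  refine ⟨‖z‖, norm_nonneg z, z.arg, ⟨Complex.arg_nonneg_iff.2 hβ, ?_⟩, hre, him⟩
  by_contra! hlt
  have hsin : 0 < sin (z.arg - a) :=
    sin_pos_of_pos_of_lt_pi (sub_pos.2 hlt) (by linarith [Complex.arg_le_pi z])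
  have hz : ‖z‖ * sin (z.arg - a) ≤ 0 := by
    rw [sin_sub]; linear_combination h + cos a * him - sin a * hre
  have hz0 : z = 0 := norm_le_zero_iff.1 (nonpos_of_mul_nonpos_left hz hsin)
  rw [hz0, Complex.arg_zero] at hlt
  linarith

theorem exists_smul_add_smul_eq_smul_arc {M : Type*} [AddCommGroup M] [Module ℝ M] (u w : M)
    {a t₁ t₂ r s : ℝ} (haπ : a ≤ π) (ht₁ : t₁ ∈ Icc 0 a) (ht₂ : t₂ ∈ Icc 0 a)
    (hr : 0 ≤ r) (hs : 0 ≤ s) :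
    ∃ ρ : ℝ, 0 ≤ ρ ∧ ∃ τ ∈ Icc 0 a, r • (cos t₁ • u + sin t₁ • w) + s • (cos t₂ • u + sin t₂ • w) =
      ρ • (cos τ • u + sin τ • w) := by
  rcases (ht₁.1.trans ht₁.2).eq_or_lt with rfl | ha
  · obtain rfl : t₁ = 0 := le_antisymm ht₁.2 ht₁.1
    obtain rfl : t₂ = 0 := le_antisymm ht₂.2 ht₂.1
    exact ⟨r + s, add_nonneg hr hs, 0, left_mem_Icc.2 le_rfl, by module⟩
  have hβ : 0 ≤ r * sin t₁ + s * sin t₂ := by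
    have := sin_nonneg_of_nonneg_of_le_pi ht₁.1 (ht₁.2.trans haπ)
    have := sin_nonneg_of_nonneg_of_le_pi ht₂.1 (ht₂.2.trans haπ)
    positivity
  -- `α sin a - β cos a = r sin (a - t₁) + s sin (a - t₂)` for the coordinates `(α, β)` of the sum
  have hsector : (r * sin t₁ + s * sin t₂) * cos a ≤ (r * cos t₁ + s * cos t₂) * sin a := by
    have h₁ := sin_nonneg_of_nonneg_of_le_pi (sub_nonneg.2 ht₁.2) (by linarith [ht₁.1])
    have h₂ := sin_nonneg_of_nonneg_of_le_pi (sub_nonneg.2 ht₂.2) (by linarith [ht₂.1])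
    rw [sin_sub] at h₁ h₂
    nlinarith [mul_nonneg hr h₁, mul_nonneg hs h₂]
  obtain ⟨ρ, hρ, τ, hτ, hcos, hsin⟩ := exists_polar_mem_Icc ha hβ hsector
  exact ⟨ρ, hρ, τ, hτ, by linear_combination (norm := module) -(hcos • u) - hsin • w⟩

theorem SphConvex.smul_add_smul_mem_s7 {n : ℕ} {A : Set (Esp n)} (hc : SphConvex A) {a b : Esp n}
    (ha : a ∈ A) (hb : b ∈ A) {r s : ℝ} (hr : 0 ≤ r) (hs : 0 ≤ s) :
    r • a + s • b ∈ Ici (0 : ℝ) • A := by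
  obtain ⟨_, ⟨u, w, l, -, -, -, -, hlπ, rfl⟩, hsegA, ⟨t₁, ht₁, rfl⟩, ⟨t₂, ht₂, rfl⟩⟩ :=
    hc a ha b hb
  obtain ⟨ρ, hρ, τ, hτ, heq⟩ := exists_smul_add_smul_eq_smul_arc u w hlπ ht₁ ht₂ hr hs
  exact ⟨ρ, hρ, _, hsegA ⟨τ, hτ, rfl⟩, heq.symm⟩

theorem SphConvex.convex_Ici_smul {n : ℕ} {A : Set (Esp n)} (hc : SphConvex A) :
    Convex ℝ (Ici (0 : ℝ) • A) := by
  intro p hp q hq μ ν hμ hν _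
  obtain ⟨r, hr, a, ha, rfl⟩ := Set.mem_smul.1 hp
  obtain ⟨s, hs, b, hb, rfl⟩ := Set.mem_smul.1 hq
  simpa only [smul_smul] using hc.smul_add_smul_mem_s7 ha hb (mul_nonneg hμ hr) (mul_nonneg hν hs)

theorem sphereSet_eq (n : ℕ) : sphereSet n = Metric.sphere 0 1 := by
  ext; simp [sphereSet]

theorem Ici_smul_inter_sphere_subset {E : Type*} [NormedAddCommGroup E] [NormedSpace ℝ E]
    {A : Set E} (hA : A ⊆ Metric.sphere 0 1) :
    Ici (0 : ℝ) • A ∩ Metric.sphere 0 1 ⊆ A := by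
  rintro _ ⟨hy, hra⟩
  obtain ⟨r, hr, a, ha, rfl⟩ := Set.mem_smul.1 hy
  have hr1 : r = 1 := by
    simpa [norm_smul, abs_of_nonneg (show (0:ℝ) ≤ r from hr), mem_sphere_zero_iff_norm.1 (hA ha)]
      using hra
  rwa [hr1, one_smul]

section Cone

variable {E : Type*} [NormedAddCommGroup E] [InnerProductSpace ℝ E] {A : Set E}
  {K : Submodule ℝ E}

theorem add_orthogonal_inter_subset {C : Set E} (hCK : C ⊆ K) :
    (C + (Kᗮ : Set E)) ∩ K ⊆ C := by
  rintro _ ⟨hy, hcz⟩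
  obtain ⟨c, hc, z, hz, rfl⟩ := Set.mem_add.1 hy
  have hzK : z ∈ K := by simpa using K.sub_mem hcz (hCK hc)
  rwa [Submodule.disjoint_def.1 K.orthogonal_disjoint z hzK hz, add_zero]

theorem subset_Ici_smul_add : A ⊆ Ici (0 : ℝ) • A + (K : Set E) := fun a ha => by
  simpa using add_mem_add (smul_mem_smul (mem_Ici.2 zero_le_one : (1 : ℝ) ∈ Ici 0) ha)
    K.zero_mem

theorem submodule_subset_Ici_smul_add (hA : A.Nonempty) :
    (K : Set E) ⊆ Ici (0 : ℝ) • A + (K : Set E) := fun z hz => by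
  simpa using add_mem_add (smul_mem_smul (mem_Ici.2 le_rfl : (0 : ℝ) ∈ Ici 0) hA.some_mem) hz

theorem smul_mem_Ici_smul_add {r : ℝ} (hr : 0 ≤ r) {p : E}
    (hp : p ∈ Ici (0 : ℝ) • A + (K : Set E)) : r • p ∈ Ici (0 : ℝ) • A + (K : Set E) := by
  obtain ⟨_, ⟨t, ht, a, ha, rfl⟩, z, hz, rfl⟩ := hp
  refine ⟨(r * t) • a, smul_mem_smul (mul_nonneg hr ht) ha, r • z, K.smul_mem r hz, ?_⟩
  rw [smul_add, smul_smul]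

theorem Ici_smul_add_orthogonal_span_inter_subset (hA : A ⊆ Metric.sphere 0 1) :
    (Ici (0 : ℝ) • A + ((Submodule.span ℝ A)ᗮ : Set E)) ∩
      (Metric.sphere 0 1 ∩ Submodule.span ℝ A) ⊆ A := by
  rintro y ⟨hyD, hy1, hyV⟩
  have hAV : Ici (0 : ℝ) • A ⊆ Submodule.span ℝ A := by
    rintro _ ⟨r, -, a, ha, rfl⟩
    exact Submodule.smul_mem _ r (Submodule.subset_span ha)
  exact Ici_smul_inter_sphere_subset hA ⟨add_orthogonal_inter_subset hAV ⟨hyD, hyV⟩, hy1⟩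

theorem span_Ici_smul_add_orthogonal_span (hA : A.Nonempty)
    [(Submodule.span ℝ A).HasOrthogonalProjection] :
    Submodule.span ℝ (Ici (0 : ℝ) • A + ((Submodule.span ℝ A)ᗮ : Set E)) = ⊤ := by
  rw [eq_top_iff, ← (Submodule.span ℝ A).sup_orthogonal_of_hasOrthogonalProjection]
  exact sup_le (Submodule.span_mono subset_Ici_smul_add)
    ((submodule_subset_Ici_smul_add hA).trans Submodule.subset_span)

end Cone

theorem notMem_interior_of_mem_frontier_preimage_val {X : Type*} [TopologicalSpace X]
    {T A D : Set X} (hD : D ∩ T ⊆ A) {x : T} (hx : x ∈ frontier (((↑) : T → X) ⁻¹' A)) :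
    (x : X) ∉ interior D := fun hxD =>
  hx.2 <| interior_maximal (fun (y : T) hy => hD ⟨interior_subset hy, y.2⟩)
    (isOpen_interior.preimage continuous_subtype_val) hxD

theorem Convex.interior_nonempty_of_span_eq_top {E : Type*} [NormedAddCommGroup E]
    [NormedSpace ℝ E] [FiniteDimensional ℝ E] {D : Set E} (hD : Convex ℝ D) (h0 : 0 ∈ D)
    (hspan : Submodule.span ℝ D = ⊤) : (interior D).Nonempty := by
  rw [hD.interior_nonempty_iff_affineSpan_eq_top]
  apply SetLike.coe_injective
  rw [← insert_eq_of_mem h0, affineSpan_insert_zero, hspan]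
  rfl

theorem Convex.exists_dual_supporting_cone {E : Type*} [TopologicalSpace E] [AddCommGroup E]
    [Module ℝ E] [IsTopologicalAddGroup E] [ContinuousSMul ℝ E] {D : Set E} {x : E}
    (hD : Convex ℝ D) (hcone : ∀ r : ℝ, 0 ≤ r → ∀ p ∈ D, r • p ∈ D)
    (hint : (interior D).Nonempty) (hxc : x ∈ closure D) (hxi : x ∉ interior D) :
    ∃ f : StrongDual ℝ E, f ≠ 0 ∧ f x = 0 ∧ ∀ p ∈ D, 0 ≤ f p := by
  obtain ⟨f, hf, hfx⟩ := geometric_hahn_banach_of_nonempty_interior_point hD hxi hint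
  obtain ⟨p₀, hp₀⟩ := hint
  have hx_nonneg : 0 ≤ f x := by
    simpa using hfx 0 (by simpa using hcone 0 le_rfl p₀ (interior_subset hp₀))
  have hfD : ∀ p ∈ D, f p ≤ 0 := by
    intro p hp
    by_contra! hpos
    have := hfx _ (hcone ((f x + 1) / f p) (by positivity) p hp)
    rw [map_smul, smul_eq_mul, div_mul_cancel₀ _ hpos.ne'] at this
    linarith
  have hx_nonpos : f x ≤ 0 := closure_minimal hfD (isClosed_le f.continuous continuous_const) hxc
  exact ⟨-f, neg_ne_zero.2 hf, by simp [le_antisymm hx_nonpos hx_nonneg],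
    fun p hp => by simpa using hfD p hp⟩

theorem exists_norm_eq_one_inner_eq_pos_mul {E : Type*} [NormedAddCommGroup E]
    [InnerProductSpace ℝ E] [CompleteSpace E] {f : StrongDual ℝ E} (hf : f ≠ 0) :
    ∃ v : E, ‖v‖ = 1 ∧ ∃ c : ℝ, 0 < c ∧ ∀ y, ⟪v, y⟫ = c * f y := by
  set w := (InnerProductSpace.toDual ℝ E).symm f
  have hw : w ≠ 0 := by simpa [w] using hf
  refine ⟨(‖w‖⁻¹ : ℝ) • w, norm_smul_inv_norm hw, ‖w‖⁻¹, by positivity, fun y => ?_⟩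
  rw [real_inner_smul_left, InnerProductSpace.toDual_symm_apply]

theorem sphConvex_supporting_hypersphere_general (n : ℕ)
    (A : Set (Esp n)) (hA : A ⊆ sphereSet n) (hc : SphConvex A)
    (x : Esp n)
    (hxT : x ∈ sphereSet n ∩ (Submodule.span ℝ A : Set (Esp n)))
    (hx : (⟨x, hxT⟩ : ↥(sphereSet n ∩ (Submodule.span ℝ A : Set (Esp n)))) ∈
      frontier (Subtype.val ⁻¹' A :
        Set ↥(sphereSet n ∩ (Submodule.span ℝ A : Set (Esp n))))) :
    ∃ v : Esp n, ‖v‖ = 1 ∧ ⟪v, x⟫ = 0 ∧ ∀ a ∈ A, 0 ≤ ⟪v, a⟫ := by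
  rw [sphereSet_eq] at hA
  set D := Ici (0 : ℝ) • A + ((Submodule.span ℝ A)ᗮ : Set (Esp n))
  have hxA : x ∈ closure A :=
    continuous_subtype_val.closure_preimage_subset A (frontier_subset_closure hx)
  have hAne : A.Nonempty := closure_nonempty_iff.1 ⟨x, hxA⟩
  have hDconv : Convex ℝ D := hc.convex_Ici_smul.add (Submodule.span ℝ A)ᗮ.convex
  have hD0 : (0 : Esp n) ∈ D := submodule_subset_Ici_smul_add hAne (Submodule.zero_mem _)
  obtain ⟨f, hf, hfx, hfD⟩ := hDconv.exists_dual_supporting_cone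
    (fun r hr p hp => smul_mem_Ici_smul_add hr hp)
    (hDconv.interior_nonempty_of_span_eq_top hD0 (span_Ici_smul_add_orthogonal_span hAne))
    (closure_mono subset_Ici_smul_add hxA)
    (notMem_interior_of_mem_frontier_preimage_val
      (sphereSet_eq n ▸ Ici_smul_add_orthogonal_span_inter_subset hA) hx)
  obtain ⟨v, hv, c, hc_pos, hvf⟩ := exists_norm_eq_one_inner_eq_pos_mul hf
  exact ⟨v, hv, by rw [hvf, hfx, mul_zero],
    fun a ha => hvf a ▸ mul_nonneg hc_pos.le (hfD a (subset_Ici_smul_add ha))⟩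

/-- Theorem 2.7 (supporting hyperspheres): for a convex subset `A ≠ Sⁿ` of
`Sⁿ` and a point `x` of the frontier of `A` in the subspace topology of
`Sⁿ ∩ span(A)`, there exists a supporting great hypersphere for `A` at `x`,
i.e. a unit vector `v` with `⟨v, x⟩ = 0` and `⟨v, a⟩ ≥ 0` for all `a ∈ A`. -/
theorem sphConvex_supporting_hypersphere (n : ℕ) (hn : 1 ≤ n)
    (A : Set (Esp n)) (hA : A ⊆ sphereSet n) (hc : SphConvex A)
    (hne : A ≠ sphereSet n) (x : Esp n)
    (hxT : x ∈ sphereSet n ∩ (Submodule.span ℝ A : Set (Esp n)))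
    (hx : (⟨x, hxT⟩ : ↥(sphereSet n ∩ (Submodule.span ℝ A : Set (Esp n)))) ∈
      frontier (Subtype.val ⁻¹' A :
        Set ↥(sphereSet n ∩ (Submodule.span ℝ A : Set (Esp n))))) :
    ∃ v : Esp n, ‖v‖ = 1 ∧ ⟪v, x⟫ = 0 ∧ ∀ a ∈ A, 0 ≤ ⟪v, a⟫ :=
  sphConvex_supporting_hypersphere_general n A hA hc x hxT hx
end
end

section
/- Let n ≥ 1. Every sequence (K_i) of nonempty compact convex subsets of Sⁿ has a subsequence that converges in the Hausdorff distance, and the limit of this subsequence is a nonempty compact convex subset of Sⁿ. (The selection and convexity part of Theorem 2.8 of the paper.) -/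
open scoped RealInnerProductSpace

noncomputable section

/-- Convergence of a sequence of subsets of `Sⁿ` in the Hausdorff distance. -/
def HConv {n : ℕ} (K : ℕ → Set (Esp n)) (L : Set (Esp n)) : Prop :=
  Filter.Tendsto (fun i => Metric.hausdorffDist (K i) L) Filter.atTop (nhds 0)

/-!
A nonempty compact subset of `Sⁿ` is a point of the space of nonempty compact subsets of the
compact set `Sⁿ`, which is compact for the Hausdorff metric (Blaschke selection), so a subsequence
converges. Convexity passes to the limit: two points of the limit are limits of points of the
`K i`; these lie on convex segments in `K i`, whose parameters (an orthonormal pair, a length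
in `[0, π]` and the two parameter values of the points) range over a compact set, so along a
further subsequence the segments converge to a convex segment through the two limit points, and
every point of that segment is a limit of points of the `K i`, hence lies in the limit set.
-/

open Metric Set Filter Topology TopologicalSpace

namespace TopologicalSpace.NonemptyCompacts

variable {α : Type*} [MetricSpace α] {k : ℕ → NonemptyCompacts α} {L : NonemptyCompacts α}

theorem exists_tendsto_mem_of_tendsto (h : Tendsto k atTop (𝓝 L)) {x : α} (hx : x ∈ L) :
    ∃ X : ℕ → α, (∀ i, X i ∈ k i) ∧ Tendsto X atTop (𝓝 x) := by
  choose X hXk hXd using fun i => (k i).isCompact.exists_infDist_eq_dist (k i).nonempty x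
  refine ⟨X, hXk, tendsto_iff_dist_tendsto_zero.2 ?_⟩
  have := ((lipschitz_infDist_set x).continuous.tendsto L).comp h
  simp only [Function.comp_def, infDist_zero_of_mem hx, hXd] at this
  simpa only [dist_comm] using this

theorem mem_of_tendsto (h : Tendsto k atTop (𝓝 L)) {Z : ℕ → α} (hZ : ∀ i, Z i ∈ k i) {z : α}
    (hz : Tendsto Z atTop (𝓝 z)) : z ∈ L := by
  have hlim := (lipschitz_infDist.continuous.tendsto (z, L)).comp (hz.prodMk_nhds h)
  simp only [Function.comp_def, infDist_zero_of_mem (hZ _)] at hlim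
  exact (L.isCompact.isClosed.mem_iff_infDist_zero L.nonempty).2
    (tendsto_nhds_unique tendsto_const_nhds hlim).symm

end TopologicalSpace.NonemptyCompacts

section Arc

variable {E : Type*} [NormedAddCommGroup E] [InnerProductSpace ℝ E]

def arcMap (q : E × E × ℝ) (t : ℝ) : E := Real.cos t • q.1 + Real.sin t • q.2.1

def arc (q : E × E × ℝ) : Set E := arcMap q '' Icc 0 q.2.2

def arcParams : Set (E × E × ℝ) :=
  {q | ‖q.1‖ = 1 ∧ ‖q.2.1‖ = 1 ∧ ⟪q.1, q.2.1⟫ = 0 ∧ q.2.2 ∈ Icc 0 Real.pi}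

/-- `((u, v, a), s, t)`: the segment `arc (u, v, a)` with the marked points `arcMap (u, v, a) s`
and `arcMap (u, v, a) t`. -/
def pointedArcParams : Set ((E × E × ℝ) × ℝ × ℝ) :=
  {p | p.1 ∈ arcParams ∧ p.2.1 ∈ Icc 0 p.1.2.2 ∧ p.2.2 ∈ Icc 0 p.1.2.2}

theorem continuous_arcMap : Continuous fun p : (E × E × ℝ) × ℝ => arcMap p.1 p.2 := by
  unfold arcMap; fun_prop

theorem isClosed_pointedArcParams : IsClosed (pointedArcParams : Set ((E × E × ℝ) × ℝ × ℝ)) := by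
  simp only [pointedArcParams, arcParams, mem_Icc, ofPred_and]
  apply_rules [IsClosed.inter, isClosed_eq, isClosed_le] <;> fun_prop

theorem isCompact_pointedArcParams [ProperSpace E] :
    IsCompact (pointedArcParams : Set ((E × E × ℝ) × ℝ × ℝ)) := by
  have hI : IsCompact (Icc 0 Real.pi) := isCompact_Icc
  refine .of_isClosed_subset (((isCompact_sphere (0 : E) 1).prod ((isCompact_sphere (0 : E) 1).prod
    hI)).prod (hI.prod hI)) isClosed_pointedArcParams ?_
  rintro ⟨⟨u, v, a⟩, s, t⟩ ⟨⟨hu, hv, -, ha⟩, hs, ht⟩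
  simp only [mem_prod, mem_sphere_zero_iff_norm, mem_Icc] at *
  exact ⟨⟨hu, hv, ha⟩, ⟨hs.1, hs.2.trans ha.2⟩, ht.1, ht.2.trans ha.2⟩

theorem Filter.Tendsto.arcMap {ι : Type*} {l : Filter ι} {q : ι → E × E × ℝ} {q₀ : E × E × ℝ}
    {t : ι → ℝ} {t₀ : ℝ} (hq : Tendsto q l (𝓝 q₀)) (ht : Tendsto t l (𝓝 t₀)) :
    Tendsto (fun i => _root_.arcMap (q i) (t i)) l (𝓝 (_root_.arcMap q₀ t₀)) :=
  (continuous_arcMap.tendsto (q₀, t₀)).comp (f := fun i => (q i, t i)) (hq.prodMk_nhds ht)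

theorem exists_tendsto_of_mem_arc {q : ℕ → E × E × ℝ} {q₀ : E × E × ℝ}
    (hq : Tendsto q atTop (𝓝 q₀)) (h0 : ∀ i, 0 ≤ (q i).2.2) {z : E} (hz : z ∈ arc q₀) :
    ∃ Z : ℕ → E, (∀ i, Z i ∈ arc (q i)) ∧ Tendsto Z atTop (𝓝 z) := by
  obtain ⟨r, hr, rfl⟩ := hz
  refine ⟨fun i => arcMap (q i) (min r (q i).2.2),
    fun i => mem_image_of_mem _ ⟨le_min hr.1 (h0 i), min_le_right _ _⟩, ?_⟩
  have hmin := (tendsto_const_nhds (x := r)).min hq.snd_nhds.snd_nhds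
  rw [min_eq_left hr.2] at hmin
  exact hq.arcMap hmin

end Arc

theorem sphereSet_eq_sphere (n : ℕ) : sphereSet n = sphere (0 : Esp n) 1 := by
  ext; simp [sphereSet]

theorem isConvexSegment_arc {n : ℕ} {q : Esp n × Esp n × ℝ} (hq : q ∈ arcParams) :
    IsConvexSegment (arc q) :=
  let ⟨hu, hv, huv, ha⟩ := hq
  ⟨q.1, q.2.1, q.2.2, hu, hv, huv, ha.1, ha.2, rfl⟩

theorem SphConvex.exists_pointedArcParams {n : ℕ} {A : Set (Esp n)} (hA : SphConvex A)
    {x y : Esp n} (hx : x ∈ A) (hy : y ∈ A) :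
    ∃ p ∈ pointedArcParams, arc p.1 ⊆ A ∧ arcMap p.1 p.2.1 = x ∧ arcMap p.1 p.2.2 = y := by
  obtain ⟨S, ⟨u, v, a, hu, hv, huv, ha0, haπ, rfl⟩, hSA, ⟨s, hs, rfl⟩, ⟨t, ht, rfl⟩⟩ :=
    hA x hx y hy
  exact ⟨((u, v, a), s, t), ⟨⟨hu, hv, huv, ha0, haπ⟩, hs, ht⟩, hSA, rfl, rfl⟩

theorem SphConvex.of_tendsto {n : ℕ} {k : ℕ → NonemptyCompacts (Esp n)}
    {L : NonemptyCompacts (Esp n)} (hk : ∀ i, SphConvex (k i : Set (Esp n)))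
    (h : Tendsto k atTop (𝓝 L)) : SphConvex (L : Set (Esp n)) := by
  intro x hx y hy
  obtain ⟨X, hXk, hXx⟩ := NonemptyCompacts.exists_tendsto_mem_of_tendsto h hx
  obtain ⟨Y, hYk, hYy⟩ := NonemptyCompacts.exists_tendsto_mem_of_tendsto h hy
  choose p hp hpk hpX hpY using fun i => (hk i).exists_pointedArcParams (hXk i) (hYk i)
  obtain ⟨p₀, hp₀, ψ, hψ, hpψ⟩ := isCompact_pointedArcParams.tendsto_subseq hp
  refine ⟨arc p₀.1, isConvexSegment_arc hp₀.1, fun z hz => ?_, ⟨p₀.2.1, hp₀.2.1, ?_⟩,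
    ⟨p₀.2.2, hp₀.2.2, ?_⟩⟩
  · obtain ⟨Z, hZ, hZz⟩ :=
      exists_tendsto_of_mem_arc hpψ.fst_nhds (fun i => (hp (ψ i)).1.2.2.2.1) hz
    exact NonemptyCompacts.mem_of_tendsto (h.comp hψ.tendsto_atTop) (fun i => hpk _ (hZ i)) hZz
  · refine tendsto_nhds_unique (hpψ.fst_nhds.arcMap hpψ.snd_nhds.fst_nhds) ?_
    simpa only [Function.comp_def, hpX] using hXx.comp hψ.tendsto_atTop
  · refine tendsto_nhds_unique (hpψ.fst_nhds.arcMap hpψ.snd_nhds.snd_nhds) ?_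
    simpa only [Function.comp_def, hpY] using hYy.comp hψ.tendsto_atTop

theorem sphConvex_selection_general (n : ℕ) (K : ℕ → Set (Esp n))
    (hne : ∀ i, (K i).Nonempty) (hcpt : ∀ i, IsCompact (K i))
    (hsub : ∀ i, K i ⊆ sphereSet n) (hc : ∀ i, SphConvex (K i)) :
    ∃ φ : ℕ → ℕ, StrictMono φ ∧ ∃ L : Set (Esp n),
      L.Nonempty ∧ IsCompact L ∧ L ⊆ sphereSet n ∧ SphConvex L ∧
      HConv (fun i => K (φ i)) L := by
  let k : ℕ → NonemptyCompacts (Esp n) := fun i => ⟨⟨K i, hcpt i⟩, hne i⟩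
  have hk : ∀ i, k i ∈ {L : NonemptyCompacts (Esp n) | (L : Set (Esp n)) ⊆ sphereSet n} := hsub
  obtain ⟨L, hLsub, φ, hφ, hlim⟩ := (NonemptyCompacts.isCompact_subsets_of_isCompact
    (sphereSet_eq_sphere n ▸ isCompact_sphere 0 1)).tendsto_subseq hk
  exact ⟨φ, hφ, L, L.nonempty, L.isCompact, hLsub, .of_tendsto (fun i => hc (φ i)) hlim,
    tendsto_iff_dist_tendsto_zero.1 hlim⟩

/-- Theorem 2.8 (selection): every sequence of nonempty compact convex subsets
of `Sⁿ` has a subsequence converging in the Hausdorff distance, and the limit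
is a nonempty compact convex subset of `Sⁿ`. -/
theorem sphConvex_selection (n : ℕ) (hn : 1 ≤ n) (K : ℕ → Set (Esp n))
    (hne : ∀ i, (K i).Nonempty) (hcpt : ∀ i, IsCompact (K i))
    (hsub : ∀ i, K i ⊆ sphereSet n) (hc : ∀ i, SphConvex (K i)) :
    ∃ φ : ℕ → ℕ, StrictMono φ ∧ ∃ L : Set (Esp n),
      L.Nonempty ∧ IsCompact L ∧ L ⊆ sphereSet n ∧ SphConvex L ∧
      HConv (fun i => K (φ i)) L :=
  sphConvex_selection_general n K hne hcpt hsub hc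
end
end

section
/- Let n ≥ 1, let u, w ∈ ℝ^{n+1} be orthonormal, and set γ(t) = (cos t)·u + (sin t)·w. Let 0 < t_p < t_q < t_s < π and put o = γ(0), p = γ(t_p), q = γ(t_q), s = γ(t_s) (so o, p, q, s are distinct points in this order on a segment of length < π in a great circle, with endpoints o and s and with p between o and q). Let η > 0 and let (A_i) be a sequence in GL(n+1, ℝ), with induced projective maps f_i(x) = A_i·x/‖A_i·x‖. Suppose that for every i, both d(f_i(o), f_i(s)) and d(f_i(p), f_i(q)) lie in the interval [η, π − η]. Then there exists c > 0 such that for every i, all six pairwise spherical distances among the four points f_i(o), f_i(p), f_i(q), f_i(s) are at least c. (Lemma 4.6 of the paper, proved via the cross-ratio.) -/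
open scoped RealInnerProductSpace

noncomputable section

/-- The spherical distance `d(x, y) = arccos ⟨x, y⟩` on `Sⁿ`. -/
def sdist {n : ℕ} (x y : Esp n) : ℝ := Real.arccos ⟪x, y⟫

/-- The projective map of `Sⁿ` induced by an invertible linear map `A`,
`x ↦ A·x / ‖A·x‖`. -/
def projAct {n : ℕ} (A : Esp n ≃ₗ[ℝ] Esp n) (x : Esp n) : Esp n :=
  ‖A x‖⁻¹ • A x


section Helpers

variable {n : ℕ}

lemma norm_gamma {u w : Esp n} (hu : ‖u‖ = 1) (hw : ‖w‖ = 1)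
    (huw : ⟪u, w⟫ = 0) (t : ℝ) : ‖Real.cos t • u + Real.sin t • w‖ = 1 := by
  have h : ‖Real.cos t • u + Real.sin t • w‖ ^ 2 = 1 := by
    rw [norm_add_sq_real, norm_smul, norm_smul, real_inner_smul_left,
      real_inner_smul_right, huw, hu, hw]
    simp [mul_pow, sq_abs]
  rw [← Real.sqrt_sq (norm_nonneg _), h, Real.sqrt_one]

lemma sin_sdist_nonneg (x y : Esp n) : 0 ≤ Real.sin (sdist x y) :=
  Real.sin_nonneg_of_nonneg_of_le_pi (Real.arccos_nonneg _) (Real.arccos_le_pi _)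

lemma sdist_ge_sin (x y : Esp n) : Real.sin (sdist x y) ≤ sdist x y :=
  Real.sin_le (Real.arccos_nonneg _)

lemma sin_sdist_sq {x y : Esp n} (hx : ‖x‖ = 1) (hy : ‖y‖ = 1) :
    Real.sin (sdist x y) ^ 2 = 1 - ⟪x, y⟫ ^ 2 := by
  have hb : |⟪x, y⟫| ≤ 1 := by
    have := abs_real_inner_le_norm x y
    rw [hx, hy] at this; simpa using this
  have h1 : 0 ≤ 1 - ⟪x, y⟫ ^ 2 := by nlinarith [sq_abs ⟪x, y⟫, abs_nonneg ⟪x, y⟫]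
  rw [sdist, Real.sin_arccos, Real.sq_sqrt h1]

lemma projAct_norm (B : Esp n ≃ₗ[ℝ] Esp n) {x : Esp n} (hx : x ≠ 0) :
    ‖projAct B x‖ = 1 := by
  have h : B x ≠ 0 := by simp [hx]
  rw [projAct, norm_smul, norm_inv, norm_norm,
    inv_mul_cancel₀ (norm_ne_zero_iff.mpr h)]

lemma sin_lower {η d : ℝ} (hη : 0 < η) (h1 : η ≤ d) (h2 : d ≤ Real.pi - η) :
    Real.sin η ≤ Real.sin d := by
  have hπ := Real.pi_pos
  have hη2 : η ≤ Real.pi / 2 := by linarith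
  have mono := Real.strictMonoOn_sin.monotoneOn
  rcases le_total d (Real.pi / 2) with h | h
  · exact mono ⟨by linarith, by linarith⟩ ⟨by linarith, h⟩ h1
  · rw [← Real.sin_pi_sub d]
    exact mono ⟨by linarith, by linarith⟩ ⟨by linarith, by linarith⟩ (by linarith)

lemma sq_cancel {a b M : ℝ} (ha : 0 ≤ a) (hb : 0 ≤ b) (hM : M ≠ 0)
    (h : a ^ 2 * M = b ^ 2 * M) : a = b := by
  have h2 : a ^ 2 = b ^ 2 := mul_right_cancel₀ hM h
  rw [← Real.sqrt_sq ha, ← Real.sqrt_sq hb, h2]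

lemma key_identity {u w : Esp n} (hu : ‖u‖ = 1) (hw : ‖w‖ = 1)
    (huw : ⟪u, w⟫ = 0) (B : Esp n ≃ₗ[ℝ] Esp n) (t1 t2 : ℝ) :
    Real.sin (sdist (projAct B (Real.cos t1 • u + Real.sin t1 • w))
        (projAct B (Real.cos t2 • u + Real.sin t2 • w))) ^ 2 *
      (‖B (Real.cos t1 • u + Real.sin t1 • w)‖ ^ 2 *
        ‖B (Real.cos t2 • u + Real.sin t2 • w)‖ ^ 2) =
    Real.sin (t2 - t1) ^ 2 * (‖B u‖ ^ 2 * ‖B w‖ ^ 2 - ⟪B u, B w⟫ ^ 2) := by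
  set x := Real.cos t1 • u + Real.sin t1 • w with hxdef
  set y := Real.cos t2 • u + Real.sin t2 • w with hydef
  have hx : ‖x‖ = 1 := norm_gamma hu hw huw t1
  have hy : ‖y‖ = 1 := norm_gamma hu hw huw t2
  have hx0 : x ≠ 0 := by rw [← norm_ne_zero_iff, hx]; norm_num
  have hy0 : y ≠ 0 := by rw [← norm_ne_zero_iff, hy]; norm_num
  have hBx : B x ≠ 0 := by simp [hx0]
  have hBy : B y ≠ 0 := by simp [hy0]
  have hNx : (0:ℝ) < ‖B x‖ := norm_pos_iff.mpr hBx
  have hNy : (0:ℝ) < ‖B y‖ := norm_pos_iff.mpr hBy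
  have hsin := sin_sdist_sq (projAct_norm B hx0) (projAct_norm B hy0)
  have hinner : ⟪projAct B x, projAct B y⟫ = ‖B x‖⁻¹ * ‖B y‖⁻¹ * ⟪B x, B y⟫ := by
    rw [projAct, projAct, real_inner_smul_left, real_inner_smul_right]; ring
  rw [hsin, hinner]
  have step1 : (1 - (‖B x‖⁻¹ * ‖B y‖⁻¹ * ⟪B x, B y⟫) ^ 2) * (‖B x‖ ^ 2 * ‖B y‖ ^ 2)
      = ‖B x‖ ^ 2 * ‖B y‖ ^ 2 - ⟪B x, B y⟫ ^ 2 := by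
    field_simp
  rw [step1]
  have hBxe : B x = Real.cos t1 • B u + Real.sin t1 • B w := by
    rw [hxdef, map_add, map_smul, map_smul]
  have hBye : B y = Real.cos t2 • B u + Real.sin t2 • B w := by
    rw [hydef, map_add, map_smul, map_smul]
  have hNx2 : ‖B x‖ ^ 2 = ⟪B x, B x⟫ := (real_inner_self_eq_norm_sq _).symm
  have hNy2 : ‖B y‖ ^ 2 = ⟪B y, B y⟫ := (real_inner_self_eq_norm_sq _).symm
  have hNu2 : ‖B u‖ ^ 2 = ⟪B u, B u⟫ := (real_inner_self_eq_norm_sq _).symm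
  have hNw2 : ‖B w‖ ^ 2 = ⟪B w, B w⟫ := (real_inner_self_eq_norm_sq _).symm
  rw [hNx2, hNy2, hNu2, hNw2, hBxe, hBye]
  simp only [inner_add_left, inner_add_right, real_inner_smul_left, real_inner_smul_right,
    Real.sin_sub]
  rw [real_inner_comm (B w) (B u)]
  ring

/-- From the cross-ratio equality `Sa * Sb * X = Sc * Sd * Y` with
`Sb, X ∈ [0,1]` and `Sc, Sd ≥ e ≥ 0`, deduce `e * e * Y ≤ Sa`. -/
lemma bound_step {Sa Sb Sc Sd X Y e : ℝ}
    (hSa : 0 ≤ Sa) (hSb0 : 0 ≤ Sb) (hSb1 : Sb ≤ 1) (hX0 : 0 ≤ X) (hX1 : X ≤ 1)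
    (hY0 : 0 ≤ Y) (he0 : 0 ≤ e) (hc : e ≤ Sc) (hd : e ≤ Sd)
    (hE : Sa * Sb * X = Sc * Sd * Y) : e * e * Y ≤ Sa := by
  have e1 : Sa * Sb * X ≤ Sa := by
    rw [mul_assoc]
    exact mul_le_of_le_one_right hSa (mul_le_one₀ hSb1 hX0 hX1)
  have e2 : e * e ≤ Sc * Sd := mul_le_mul hc hd he0 (le_trans he0 hc)
  have e3 : e * e * Y ≤ Sc * Sd * Y := mul_le_mul_of_nonneg_right e2 hY0
  linarith

end Helpers

set_option maxHeartbeats 2000000 in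
/-- Lemma 4.6 (cross-ratio estimate): let `o, p, q, s` be points in this order
on a segment of length `< π` of a great circle, with endpoints `o, s`, and let
`f i` be projective maps such that `d(f i o, f i s)` and `d(f i p, f i q)` lie
in `[η, π - η]`. Then all six pairwise spherical distances among
`f i o, f i p, f i q, f i s` are bounded below by a positive constant. -/
theorem crossratio_distance_bound (n : ℕ) (hn : 1 ≤ n) (u w : Esp n)
    (hu : ‖u‖ = 1) (hw : ‖w‖ = 1) (huw : ⟪u, w⟫ = 0)
    (tp tq ts : ℝ) (h0p : 0 < tp) (hpq : tp < tq) (hqs : tq < ts)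
    (hsPi : ts < Real.pi)
    (o p q s : Esp n) (ho : o = u)
    (hp : p = Real.cos tp • u + Real.sin tp • w)
    (hq : q = Real.cos tq • u + Real.sin tq • w)
    (hs : s = Real.cos ts • u + Real.sin ts • w)
    (η : ℝ) (hη : 0 < η) (A : ℕ → (Esp n ≃ₗ[ℝ] Esp n))
    (hbound : ∀ i,
      sdist (projAct (A i) o) (projAct (A i) s) ∈ Set.Icc η (Real.pi - η) ∧
      sdist (projAct (A i) p) (projAct (A i) q) ∈ Set.Icc η (Real.pi - η)) :
    ∃ c : ℝ, 0 < c ∧ ∀ i,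
      c ≤ sdist (projAct (A i) o) (projAct (A i) p) ∧
      c ≤ sdist (projAct (A i) o) (projAct (A i) q) ∧
      c ≤ sdist (projAct (A i) o) (projAct (A i) s) ∧
      c ≤ sdist (projAct (A i) p) (projAct (A i) q) ∧
      c ≤ sdist (projAct (A i) p) (projAct (A i) s) ∧
      c ≤ sdist (projAct (A i) q) (projAct (A i) s) := by

  -- basic positivity facts
  have hπ := Real.pi_pos
  have hos0 := (hbound 0).1
  have hηhalf : η ≤ Real.pi - η := le_trans hos0.1 hos0.2
  have hsη : 0 < Real.sin η := Real.sin_pos_of_pos_of_lt_pi hη (by linarith)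
  have hstp : 0 < Real.sin tp := Real.sin_pos_of_pos_of_lt_pi h0p (by linarith)
  have hstq : 0 < Real.sin tq := Real.sin_pos_of_pos_of_lt_pi (by linarith) (by linarith)
  have hsts : 0 < Real.sin ts := Real.sin_pos_of_pos_of_lt_pi (by linarith) hsPi
  have hsqp : 0 < Real.sin (tq - tp) := Real.sin_pos_of_pos_of_lt_pi (by linarith) (by linarith)
  have hssp : 0 < Real.sin (ts - tp) := Real.sin_pos_of_pos_of_lt_pi (by linarith) (by linarith)
  have hssq : 0 < Real.sin (ts - tq) := Real.sin_pos_of_pos_of_lt_pi (by linarith) (by linarith)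
  set c1 : ℝ := Real.sin η * Real.sin η * (Real.sin tp * Real.sin (ts - tq)) with hc1
  set c2 : ℝ := Real.sin η * Real.sin η * (Real.sin tq * Real.sin (ts - tp)) with hc2
  have hc1pos : 0 < c1 := by positivity
  have hc2pos : 0 < c2 := by positivity
  refine ⟨min (min c1 c2) η, lt_min (lt_min hc1pos hc2pos) hη, fun i => ?_⟩
  obtain ⟨⟨hos1, hos2⟩, ⟨hpq1, hpq2⟩⟩ := hbound i
  have ho' : o = Real.cos 0 • u + Real.sin 0 • w := by
    rw [ho]; simp
  -- instantiate the key identity at the six pairs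
  have Kop := key_identity hu hw huw (A i) 0 tp
  rw [← ho', ← hp, sub_zero] at Kop
  have Koq := key_identity hu hw huw (A i) 0 tq
  rw [← ho', ← hq, sub_zero] at Koq
  have Kos := key_identity hu hw huw (A i) 0 ts
  rw [← ho', ← hs, sub_zero] at Kos
  have Kpq := key_identity hu hw huw (A i) tp tq
  rw [← hp, ← hq] at Kpq
  have Kps := key_identity hu hw huw (A i) tp ts
  rw [← hp, ← hs] at Kps
  have Kqs := key_identity hu hw huw (A i) tq ts
  rw [← hq, ← hs] at Kqs
  -- abbreviations
  set Sop := Real.sin (sdist (projAct (A i) o) (projAct (A i) p)) with hSop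
  set Soq := Real.sin (sdist (projAct (A i) o) (projAct (A i) q)) with hSoq
  set Sos := Real.sin (sdist (projAct (A i) o) (projAct (A i) s)) with hSos
  set Spq := Real.sin (sdist (projAct (A i) p) (projAct (A i) q)) with hSpq
  set Sps := Real.sin (sdist (projAct (A i) p) (projAct (A i) s)) with hSps
  set Sqs := Real.sin (sdist (projAct (A i) q) (projAct (A i) s)) with hSqs
  set No := ‖(A i) o‖ ^ 2 with hNo
  set Np := ‖(A i) p‖ ^ 2 with hNp
  set Nq := ‖(A i) q‖ ^ 2 with hNq
  set Ns := ‖(A i) s‖ ^ 2 with hNs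
  set E := ‖(A i) u‖ ^ 2 * ‖(A i) w‖ ^ 2 - ⟪(A i) u, (A i) w⟫ ^ 2 with hE
  -- positivity of the norms
  have hovec : o ≠ 0 := by rw [← norm_ne_zero_iff, ho, hu]; norm_num
  have hpvec : p ≠ 0 := by rw [← norm_ne_zero_iff, hp, norm_gamma hu hw huw]; norm_num
  have hqvec : q ≠ 0 := by rw [← norm_ne_zero_iff, hq, norm_gamma hu hw huw]; norm_num
  have hsvec : s ≠ 0 := by rw [← norm_ne_zero_iff, hs, norm_gamma hu hw huw]; norm_num
  have hNo0 : 0 < No := by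
    have hAo : (A i) o ≠ 0 := by simp [hovec]
    rw [hNo]; exact pow_pos (norm_pos_iff.mpr hAo) 2
  have hNp0 : 0 < Np := by
    have hAp : (A i) p ≠ 0 := by simp [hpvec]
    rw [hNp]; exact pow_pos (norm_pos_iff.mpr hAp) 2
  have hNq0 : 0 < Nq := by
    have hAq : (A i) q ≠ 0 := by simp [hqvec]
    rw [hNq]; exact pow_pos (norm_pos_iff.mpr hAq) 2
  have hNs0 : 0 < Ns := by
    have hAs : (A i) s ≠ 0 := by simp [hsvec]
    rw [hNs]; exact pow_pos (norm_pos_iff.mpr hAs) 2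
  clear_value Sop Soq Sos Spq Sps Sqs No Np Nq Ns E
  have hM0 : (No * Np * Nq * Ns) ≠ 0 := by positivity
  -- nonnegativity and ≤ 1 of the sines
  have h0op : 0 ≤ Sop := by rw [hSop]; exact sin_sdist_nonneg _ _
  have h0oq : 0 ≤ Soq := by rw [hSoq]; exact sin_sdist_nonneg _ _
  have h0os : 0 ≤ Sos := by rw [hSos]; exact sin_sdist_nonneg _ _
  have h0pq : 0 ≤ Spq := by rw [hSpq]; exact sin_sdist_nonneg _ _
  have h0ps : 0 ≤ Sps := by rw [hSps]; exact sin_sdist_nonneg _ _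
  have h0qs : 0 ≤ Sqs := by rw [hSqs]; exact sin_sdist_nonneg _ _
  have h1qs : Sqs ≤ 1 := by rw [hSqs]; exact Real.sin_le_one _
  have h1op : Sop ≤ 1 := by rw [hSop]; exact Real.sin_le_one _
  have h1oq : Soq ≤ 1 := by rw [hSoq]; exact Real.sin_le_one _
  have h1ps : Sps ≤ 1 := by rw [hSps]; exact Real.sin_le_one _
  -- lower bounds from the hypothesis
  have hηos : Real.sin η ≤ Sos := by rw [hSos]; exact sin_lower hη hos1 hos2
  have hηpq : Real.sin η ≤ Spq := by rw [hSpq]; exact sin_lower hη hpq1 hpq2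
  -- cross-ratio equalities
  have hX0 : 0 ≤ Real.sin ts * Real.sin (tq - tp) := by positivity
  have hX1 : Real.sin ts * Real.sin (tq - tp) ≤ 1 :=
    mul_le_one₀ (Real.sin_le_one _) hsqp.le (Real.sin_le_one _)
  have h12 : (Sop ^ 2 * (No * Np)) * (Sqs ^ 2 * (Nq * Ns))
      = (Real.sin tp ^ 2 * E) * (Real.sin (ts - tq) ^ 2 * E) := by rw [Kop, Kqs]
  have h34 : (Sos ^ 2 * (No * Ns)) * (Spq ^ 2 * (Np * Nq))
      = (Real.sin ts ^ 2 * E) * (Real.sin (tq - tp) ^ 2 * E) := by rw [Kos, Kpq]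
  have hEq1 : (Sop * Sqs * (Real.sin ts * Real.sin (tq - tp))) ^ 2 * (No * Np * Nq * Ns)
      = (Sos * Spq * (Real.sin tp * Real.sin (ts - tq))) ^ 2 * (No * Np * Nq * Ns) := by
    linear_combination (Real.sin ts * Real.sin (tq - tp)) ^ 2 * h12
      - (Real.sin tp * Real.sin (ts - tq)) ^ 2 * h34
  have hA1 : Sop * Sqs * (Real.sin ts * Real.sin (tq - tp))
      = Sos * Spq * (Real.sin tp * Real.sin (ts - tq)) :=
    sq_cancel (mul_nonneg (mul_nonneg h0op h0qs) hX0)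
      (mul_nonneg (mul_nonneg h0os h0pq) (by positivity)) hM0 hEq1
  have h12' : (Soq ^ 2 * (No * Nq)) * (Sps ^ 2 * (Np * Ns))
      = (Real.sin tq ^ 2 * E) * (Real.sin (ts - tp) ^ 2 * E) := by rw [Koq, Kps]
  have hEq2 : (Soq * Sps * (Real.sin ts * Real.sin (tq - tp))) ^ 2 * (No * Np * Nq * Ns)
      = (Sos * Spq * (Real.sin tq * Real.sin (ts - tp))) ^ 2 * (No * Np * Nq * Ns) := by
    linear_combination (Real.sin ts * Real.sin (tq - tp)) ^ 2 * h12'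
      - (Real.sin tq * Real.sin (ts - tp)) ^ 2 * h34
  have hA2 : Soq * Sps * (Real.sin ts * Real.sin (tq - tp))
      = Sos * Spq * (Real.sin tq * Real.sin (ts - tp)) :=
    sq_cancel (mul_nonneg (mul_nonneg h0oq h0ps) hX0)
      (mul_nonneg (mul_nonneg h0os h0pq) (by positivity)) hM0 hEq2
  -- deduce the sine lower bounds
  have bop : c1 ≤ Sop :=
    bound_step h0op h0qs h1qs hX0 hX1 (by positivity) hsη.le hηos hηpq hA1
  have bqs : c1 ≤ Sqs := by
    refine bound_step h0qs h0op h1op hX0 hX1 (by positivity) hsη.le hηos hηpq ?_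
    linear_combination hA1
  have boq : c2 ≤ Soq :=
    bound_step h0oq h0ps h1ps hX0 hX1 (by positivity) hsη.le hηos hηpq hA2
  have bps : c2 ≤ Sps := by
    refine bound_step h0ps h0oq h1oq hX0 hX1 (by positivity) hsη.le hηos hηpq ?_
    linear_combination hA2
  -- conclude, using sin d ≤ d
  have gop := sdist_ge_sin (projAct (A i) o) (projAct (A i) p)
  have goq := sdist_ge_sin (projAct (A i) o) (projAct (A i) q)
  have gps := sdist_ge_sin (projAct (A i) p) (projAct (A i) s)
  have gqs := sdist_ge_sin (projAct (A i) q) (projAct (A i) s)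
  have m1 : min (min c1 c2) η ≤ c1 := le_trans (min_le_left _ _) (min_le_left _ _)
  have m2 : min (min c1 c2) η ≤ c2 := le_trans (min_le_left _ _) (min_le_right _ _)
  have m3 : min (min c1 c2) η ≤ η := min_le_right _ _
  rw [← hSop] at gop
  rw [← hSoq] at goq
  rw [← hSps] at gps
  rw [← hSqs] at gqs
  exact ⟨by linarith, by linarith, by linarith, by linarith, by linarith, by linarith⟩
end
end

section
/- Let n ≥ 1 and ε > 0. For each i ∈ ℕ let K_i ⊆ Sⁿ be a closed spherical ε-ball, i.e., K_i = {x ∈ Sⁿ : d(x, c_i) ≤ ε} for some c_i ∈ Sⁿ, and let d_i be the diagonal (n+1)×(n+1) matrix with positive diagonal entries μ_i(0), …, μ_i(n) satisfying ∏_{j=0}^{n} μ_i(j) = 1 and μ_i(0) = max_{0≤j≤n} μ_i(j). Suppose the image sets {d_i·x/‖d_i·x‖ : x ∈ K_i} converge in the Hausdorff distance to a singleton {y}. Then: (1) y = e₀ or y = −e₀, where e₀ is the first standard basis vector of ℝ^{n+1}; (2) there exists N such that for all i > N and all j ∈ {1, …, n}, μ_i(0) > μ_i(j); and (3) μ_i(0)/max_{1≤j≤n}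 μ_i(j) → ∞ as i → ∞. (Lemma B.2 of the paper.) -/
open scoped RealInnerProductSpace

noncomputable section

/-- The vector `(μ 0 * x 0, …, μ n * x n)`: the action of the diagonal matrix
with diagonal entries `μ` on `x`. -/
def diagVec {n : ℕ} (μ : Fin (n + 1) → ℝ) (x : Esp n) : Esp n :=
  (EuclideanSpace.equiv (Fin (n + 1)) ℝ).symm
    (fun j => μ j * EuclideanSpace.equiv (Fin (n + 1)) ℝ x j)

/-- The projective map of `Sⁿ` induced by the diagonal matrix with diagonal
entries `μ`: `x ↦ d·x / ‖d·x‖`. -/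
def diagAct {n : ℕ} (μ : Fin (n + 1) → ℝ) (x : Esp n) : Esp n :=
  ‖diagVec μ x‖⁻¹ • diagVec μ x

/-!
Fix `j ≠ 0`. Every ball `K i` contains two unit vectors `u, w` whose `(0, j)`-minor
`u 0 * w j - u j * w 0` is bounded below by a constant depending on `ε` only, with `|u 0|` bounded
below as well. The diagonal map multiplies the minor by `μ 0 * μ j / (‖d u‖ * ‖d w‖) ≥ μ j / μ 0`,
while the minor of two unit vectors is at most twice their distance, hence at most four times the
Hausdorff distance from the image of `K i` to `{y}`. So `μ j / μ 0 → 0`; and since `|u 0|` stays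
away from `0`, the `j`-th coordinate of the image of `u`, and with it `y j`, tends to `0` too.
-/

open Filter Topology Metric

namespace NormedSpace

variable {V : Type*} [NormedAddCommGroup V] [NormedSpace ℝ V]

theorem norm_normalize_le_one (x : V) : ‖NormedSpace.normalize x‖ ≤ 1 := by
  by_cases hx : x = 0
  · simp [hx]
  · exact (NormedSpace.norm_normalize hx).le

theorem norm_normalize_sub_le {c : V} (hc : ‖c‖ = 1) (x : V) :
    ‖NormedSpace.normalize x - c‖ ≤ 2 * ‖x - c‖ := by
  by_cases hx : x = 0
  · simp [hx, hc]
  have hxx : ‖NormedSpace.normalize x - x‖ = |1 - ‖x‖| := by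
    have hx' : ‖x‖ ≠ 0 := norm_ne_zero_iff.2 hx
    rw [NormedSpace.normalize, ← one_smul ℝ x, smul_smul, ← sub_smul, one_smul, mul_one,
      norm_smul, Real.norm_eq_abs, show 1 - ‖x‖ = (‖x‖⁻¹ - 1) * ‖x‖ by field_simp, abs_mul,
      abs_norm]
  calc ‖NormedSpace.normalize x - c‖ ≤ ‖NormedSpace.normalize x - x‖ + ‖x - c‖ :=
        norm_sub_le_norm_sub_add_norm_sub _ _ _
    _ ≤ ‖x - c‖ + ‖x - c‖ := by
        rw [hxx, ← hc, norm_sub_rev x c]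
        gcongr
        exact abs_norm_sub_norm_le c x
    _ = 2 * ‖x - c‖ := by ring

end NormedSpace

section CoordMinor

variable {ι : Type*}

def coordMinor (k l : ι) (x z : EuclideanSpace ℝ ι) : ℝ := x k * z l - x l * z k

theorem EuclideanSpace.abs_apply_le_norm [Fintype ι] (x : EuclideanSpace ℝ ι) (k : ι) :
    |x k| ≤ ‖x‖ := by
  simpa using PiLp.norm_apply_le x k

theorem coordMinor_smul_smul (k l : ι) (a b : ℝ) (x z : EuclideanSpace ℝ ι) :
    coordMinor k l (a • x) (b • z) = a * b * coordMinor k l x z := by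
  simp only [coordMinor, PiLp.smul_apply, smul_eq_mul]
  ring

theorem abs_coordMinor_le [Fintype ι] (k l : ι) (x z : EuclideanSpace ℝ ι) :
    |coordMinor k l x z| ≤ 2 * ‖x‖ * ‖z - x‖ := by
  have h : coordMinor k l x z = x k * (z - x) l - x l * (z - x) k := by
    simp only [coordMinor, PiLp.sub_apply]
    ring
  calc |coordMinor k l x z| ≤ |x k| * |(z - x) l| + |x l| * |(z - x) k| := by
        rw [h, ← abs_mul, ← abs_mul]
        exact abs_sub _ _
    _ ≤ ‖x‖ * ‖z - x‖ + ‖x‖ * ‖z - x‖ := by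
        gcongr <;> exact EuclideanSpace.abs_apply_le_norm _ _
    _ = 2 * ‖x‖ * ‖z - x‖ := by ring

theorem coordMinor_add_single_add_single [DecidableEq ι] {k l : ι} (hkl : k ≠ l)
    (c : EuclideanSpace ℝ ι) (s t : ℝ) :
    coordMinor k l (c + EuclideanSpace.single k s) (c + EuclideanSpace.single l t) =
      c k * t + s * c l + s * t := by
  simp only [coordMinor, PiLp.add_apply, PiLp.single_eq_same, ne_eq, hkl, hkl.symm,
    not_false_eq_true, PiLp.single_eq_of_ne, add_zero]
  ring

theorem exists_sign_mul_nonneg (a : ℝ) : ∃ σ : ℝ, |σ| = 1 ∧ 0 ≤ σ * a := by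
  rcases le_total 0 a with ha | ha
  · exact ⟨1, abs_one, by linarith⟩
  · exact ⟨-1, by simp, by linarith⟩

theorem le_abs_add_single_apply_self [DecidableEq ι] {σ : ℝ} (hσ : |σ| = 1)
    (c : EuclideanSpace ℝ ι) (k : ι) (hσc : 0 ≤ σ * c k) (s : ℝ) :
    s ≤ |(c + EuclideanSpace.single k (σ * s)) k| := by
  have hσ2 : σ ^ 2 = 1 := by rw [← sq_abs, hσ, one_pow]
  have h : σ * (c + EuclideanSpace.single k (σ * s)) k = σ * c k + s := by
    simp only [PiLp.add_apply, PiLp.single_apply, if_true]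
    linear_combination s * hσ2
  calc s ≤ σ * (c + EuclideanSpace.single k (σ * s)) k := by linarith
    _ ≤ |(c + EuclideanSpace.single k (σ * s)) k| :=
      (le_abs_self _).trans (by rw [abs_mul, hσ, one_mul])

/-- Push `c` away from the origin along the axes `k` and `l`: the signs make every term of the
minor nonnegative. -/
theorem exists_abs_coordMinor_ge [Fintype ι] [DecidableEq ι] {k l : ι} (hkl : k ≠ l)
    (c : EuclideanSpace ℝ ι) {s : ℝ} (hs : 0 ≤ s) :
    ∃ x z : EuclideanSpace ℝ ι, ‖x - c‖ = s ∧ ‖z - c‖ = s ∧ s ≤ |x k| ∧ s ≤ |z l| ∧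
      s ^ 2 ≤ |coordMinor k l x z| := by
  obtain ⟨σ, hσ, hσc⟩ := exists_sign_mul_nonneg (c k)
  obtain ⟨τ, hτ, hτc⟩ := exists_sign_mul_nonneg (c l)
  refine ⟨c + EuclideanSpace.single k (σ * s), c + EuclideanSpace.single l (τ * s),
    by simp [hσ, abs_of_nonneg hs], by simp [hτ, abs_of_nonneg hs],
    le_abs_add_single_apply_self hσ c k hσc s, le_abs_add_single_apply_self hτ c l hτc s, ?_⟩
  have hσ2 : σ ^ 2 = 1 := by rw [← sq_abs, hσ, one_pow]
  have hτ2 : τ ^ 2 = 1 := by rw [← sq_abs, hτ, one_pow]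
  rw [coordMinor_add_single_add_single hkl]
  have h : σ * τ * (c k * (τ * s) + σ * s * c l + σ * s * (τ * s)) =
      s * (σ * c k) + s * (τ * c l) + s ^ 2 := by
    linear_combination (σ * c k * s) * hτ2 + (τ * c l * s) * hσ2 + s ^ 2 * (τ ^ 2 * hσ2 + hτ2)
  calc s ^ 2 ≤ σ * τ * (c k * (τ * s) + σ * s * c l + σ * s * (τ * s)) := by
        rw [h]; nlinarith
    _ ≤ |c k * (τ * s) + σ * s * c l + σ * s * (τ * s)| :=
      (le_abs_self _).trans (by rw [abs_mul, abs_mul, hσ, hτ, one_mul, one_mul])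

theorem exists_unit_pair_abs_coordMinor_ge [Fintype ι] [DecidableEq ι] {k l : ι} (hkl : k ≠ l)
    {c : EuclideanSpace ℝ ι} (hc : ‖c‖ = 1) {s : ℝ} (hs0 : 0 < s) (hs1 : s ≤ 1) :
    ∃ u w : EuclideanSpace ℝ ι, ‖u‖ = 1 ∧ ‖w‖ = 1 ∧ ‖u - c‖ ≤ 2 * s ∧ ‖w - c‖ ≤ 2 * s ∧
      s / 2 ≤ |u k| ∧ s ^ 2 / 4 ≤ |coordMinor k l u w| := by
  obtain ⟨x, z, hxc, hzc, hxk, hzl, hxz⟩ := exists_abs_coordMinor_ge hkl c hs0.le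
  have hxpos : 0 < ‖x‖ := hs0.trans_le (hxk.trans (EuclideanSpace.abs_apply_le_norm x k))
  have hzpos : 0 < ‖z‖ := hs0.trans_le (hzl.trans (EuclideanSpace.abs_apply_le_norm z l))
  have hx2 : ‖x‖ ≤ 2 := by linarith [norm_sub_norm_le x c]
  have hz2 : ‖z‖ ≤ 2 := by linarith [norm_sub_norm_le z c]
  refine ⟨NormedSpace.normalize x, NormedSpace.normalize z,
    NormedSpace.norm_normalize (norm_pos_iff.1 hxpos),
    NormedSpace.norm_normalize (norm_pos_iff.1 hzpos),
    by linarith [NormedSpace.norm_normalize_sub_le hc x],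
    by linarith [NormedSpace.norm_normalize_sub_le hc z], ?_, ?_⟩
  · rw [NormedSpace.normalize, PiLp.smul_apply, smul_eq_mul, abs_mul, abs_inv, abs_norm,
      inv_mul_eq_div, le_div_iff₀ hxpos]
    nlinarith
  · rw [NormedSpace.normalize, NormedSpace.normalize, coordMinor_smul_smul, abs_mul, abs_mul,
      abs_inv, abs_inv, abs_norm, abs_norm, ← mul_inv, inv_mul_eq_div,
      le_div_iff₀ (mul_pos hxpos hzpos)]
    nlinarith [mul_le_mul hx2 hz2 hzpos.le zero_le_two]

end CoordMinor

section Sphere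

variable {n : ℕ}

theorem inner_eq_one_sub_norm_sub_sq {x c : Esp n} (hx : ‖x‖ = 1) (hc : ‖c‖ = 1) :
    ⟪x, c⟫ = 1 - ‖x - c‖ ^ 2 / 2 := by
  rw [norm_sub_sq_real, hx, hc]
  ring

/-- The radius is uniform in the centre because `sdist x c = arccos (1 - ‖x - c‖ ^ 2 / 2)`
depends on `‖x - c‖` alone. -/
theorem exists_pos_forall_sdist_le {ε : ℝ} (hε : 0 < ε) :
    ∃ r > 0, ∀ x c : Esp n, ‖x‖ = 1 → ‖c‖ = 1 → ‖x - c‖ ≤ r → sdist x c ≤ ε := by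
  have hcont : Continuous fun d : ℝ => Real.arccos (1 - d ^ 2 / 2) := by fun_prop
  have hev : ∀ᶠ d in 𝓝 (0 : ℝ), Real.arccos (1 - d ^ 2 / 2) < ε :=
    hcont.continuousAt.eventually (gt_mem_nhds (by simpa using hε))
  obtain ⟨ρ, hρ, hball⟩ := Metric.eventually_nhds_iff.1 hev
  refine ⟨ρ / 2, half_pos hρ, fun x c hx hc hxc => ?_⟩
  rw [sdist, inner_eq_one_sub_norm_sub_sq hx hc]
  refine (hball ?_).le
  rw [Real.dist_eq, sub_zero, abs_norm]
  linarith

end Sphere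

section Diagonal

variable {n : ℕ}

theorem diagVec_apply (μ : Fin (n + 1) → ℝ) (x : Esp n) (j : Fin (n + 1)) :
    diagVec μ x j = μ j * x j := rfl

theorem diagAct_eq_normalize (μ : Fin (n + 1) → ℝ) (x : Esp n) :
    diagAct μ x = NormedSpace.normalize (diagVec μ x) := rfl

theorem norm_diagAct_le_one (μ : Fin (n + 1) → ℝ) (x : Esp n) : ‖diagAct μ x‖ ≤ 1 :=
  NormedSpace.norm_normalize_le_one _

theorem norm_diagVec_le {μ : Fin (n + 1) → ℝ} {M : ℝ} (hμ : ∀ j, |μ j| ≤ M) (x : Esp n) :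
    ‖diagVec μ x‖ ≤ M * ‖x‖ := by
  have hM : 0 ≤ M := (abs_nonneg _).trans (hμ 0)
  refine le_of_sq_le_sq ?_ (by positivity)
  rw [mul_pow, EuclideanSpace.norm_sq_eq, EuclideanSpace.norm_sq_eq, Finset.mul_sum]
  refine Finset.sum_le_sum fun j _ => ?_
  rw [diagVec_apply, Real.norm_eq_abs, Real.norm_eq_abs, abs_mul, mul_pow]
  gcongr
  exact hμ j

theorem diagVec_ne_zero {μ : Fin (n + 1) → ℝ} (hμ : ∀ j, μ j ≠ 0) {x : Esp n} (hx : x ≠ 0) :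
    diagVec μ x ≠ 0 := by
  contrapose! hx
  ext j
  simpa [diagVec_apply, hμ j] using congrArg (· j) hx

theorem coordMinor_diagVec (μ : Fin (n + 1) → ℝ) (k l : Fin (n + 1)) (x z : Esp n) :
    coordMinor k l (diagVec μ x) (diagVec μ z) = μ k * μ l * coordMinor k l x z := by
  simp only [coordMinor, diagVec_apply]
  ring

theorem abs_diagAct_apply_mul_le (μ : Fin (n + 1) → ℝ) (x : Esp n) (k l : Fin (n + 1)) :
    |diagAct μ x l| * |μ k * x k| ≤ |μ l * x l| := by
  rw [diagAct_eq_normalize, NormedSpace.normalize, PiLp.smul_apply, smul_eq_mul, abs_mul,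
    abs_inv, abs_norm, ← diagVec_apply, ← diagVec_apply]
  by_cases h : ‖diagVec μ x‖ = 0
  · simp [h]
  calc ‖diagVec μ x‖⁻¹ * |diagVec μ x l| * |diagVec μ x k|
      = |diagVec μ x l| * (|diagVec μ x k| / ‖diagVec μ x‖) := by ring
    _ ≤ |diagVec μ x l| * 1 := by
        gcongr
        exact div_le_one_of_le₀ (EuclideanSpace.abs_apply_le_norm _ _) (norm_nonneg _)
    _ = |diagVec μ x l| := mul_one _

/-- The minor of the images is the minor of `u, w` times
`μ k * μ l / (‖diagVec μ u‖ * ‖diagVec μ w‖) ≥ μ l / μ k`, and the images are unit vectors. -/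
theorem div_mul_abs_coordMinor_le {μ : Fin (n + 1) → ℝ} (hpos : ∀ j, 0 < μ j) {k : Fin (n + 1)}
    (hmax : ∀ j, μ j ≤ μ k) (l : Fin (n + 1)) {u w : Esp n} (hu : ‖u‖ = 1) (hw : ‖w‖ = 1) :
    μ l / μ k * |coordMinor k l u w| ≤ 2 * ‖diagAct μ w - diagAct μ u‖ := by
  have hμ : ∀ j, |μ j| ≤ μ k := fun j => (abs_of_pos (hpos j)).symm ▸ hmax j
  have hDu : 0 < ‖diagVec μ u‖ := norm_pos_iff.2 <|
    diagVec_ne_zero (fun j => (hpos j).ne') (norm_ne_zero_iff.1 (by simp [hu]))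
  have hDw : 0 < ‖diagVec μ w‖ := norm_pos_iff.2 <|
    diagVec_ne_zero (fun j => (hpos j).ne') (norm_ne_zero_iff.1 (by simp [hw]))
  have hDu' : ‖diagVec μ u‖ ≤ μ k := by simpa [hu] using norm_diagVec_le hμ u
  have hDw' : ‖diagVec μ w‖ ≤ μ k := by simpa [hw] using norm_diagVec_le hμ w
  have himage : |coordMinor k l (diagAct μ u) (diagAct μ w)| =
      μ k * μ l / (‖diagVec μ u‖ * ‖diagVec μ w‖) * |coordMinor k l u w| := by
    rw [diagAct_eq_normalize, diagAct_eq_normalize, NormedSpace.normalize,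
      NormedSpace.normalize, coordMinor_smul_smul, coordMinor_diagVec]
    simp only [abs_mul, abs_inv, abs_norm, abs_of_pos (hpos k), abs_of_pos (hpos l)]
    field_simp
  calc μ l / μ k * |coordMinor k l u w|
      ≤ μ k * μ l / (‖diagVec μ u‖ * ‖diagVec μ w‖) * |coordMinor k l u w| := by
        refine mul_le_mul_of_nonneg_right ?_ (abs_nonneg _)
        rw [div_le_div_iff₀ (hpos k) (by positivity)]
        nlinarith [mul_le_mul hDu' hDw' hDw.le (hpos k).le, hpos l]
    _ = |coordMinor k l (diagAct μ u) (diagAct μ w)| := himage.symm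
    _ ≤ 2 * ‖diagAct μ u‖ * ‖diagAct μ w - diagAct μ u‖ := abs_coordMinor_le _ _ _ _
    _ ≤ 2 * ‖diagAct μ w - diagAct μ u‖ := by
        nlinarith [norm_diagAct_le_one μ u, norm_nonneg (diagAct μ w - diagAct μ u)]

end Diagonal

section Hausdorff

theorem dist_le_hausdorffDist_singleton {E : Type*} [PseudoMetricSpace E] {A : Set E}
    (hA : Bornology.IsBounded A) {a : E} (ha : a ∈ A) (y : E) :
    dist a y ≤ hausdorffDist A {y} := by
  have hfin := hausdorffEDist_ne_top_of_nonempty_of_bounded ⟨a, ha⟩ (Set.singleton_nonempty y)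
    hA Bornology.isBounded_singleton
  simpa using infDist_le_hausdorffDist_of_mem ha hfin

variable {n : ℕ}

theorem isBounded_image_diagAct (μ : Fin (n + 1) → ℝ) (K : Set (Esp n)) :
    Bornology.IsBounded (diagAct μ '' K) := by
  refine (isBounded_closedBall (x := (0 : Esp n)) (r := 1)).subset ?_
  rintro _ ⟨x, -, rfl⟩
  exact mem_closedBall_zero_iff.2 (norm_diagAct_le_one μ x)

theorem dist_diagAct_le_hausdorffDist (μ : Fin (n + 1) → ℝ) {K : Set (Esp n)} {x : Esp n}
    (hx : x ∈ K) (y : Esp n) : dist (diagAct μ x) y ≤ hausdorffDist (diagAct μ '' K) {y} :=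
  dist_le_hausdorffDist_singleton (isBounded_image_diagAct μ K) (Set.mem_image_of_mem _ hx) y

theorem abs_norm_sub_one_le_hausdorffDist {μ : Fin (n + 1) → ℝ} (hpos : ∀ j, 0 < μ j)
    {K : Set (Esp n)} {x : Esp n} (hx : x ∈ K) (hx1 : ‖x‖ = 1) (y : Esp n) :
    |‖y‖ - 1| ≤ hausdorffDist (diagAct μ '' K) {y} := by
  have hD : diagVec μ x ≠ 0 :=
    diagVec_ne_zero (fun j => (hpos j).ne') (norm_ne_zero_iff.1 (by simp [hx1]))
  calc |‖y‖ - 1| = |‖y‖ - ‖diagAct μ x‖| := by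
        rw [diagAct_eq_normalize, NormedSpace.norm_normalize hD]
    _ ≤ dist (diagAct μ x) y := by
        rw [dist_comm, dist_eq_norm]
        exact abs_norm_sub_norm_le _ _
    _ ≤ _ := dist_diagAct_le_hausdorffDist μ hx y

theorem div_mul_abs_coordMinor_le_hausdorffDist {μ : Fin (n + 1) → ℝ} (hpos : ∀ j, 0 < μ j)
    {k : Fin (n + 1)} (hmax : ∀ j, μ j ≤ μ k) (l : Fin (n + 1)) {K : Set (Esp n)} {u w : Esp n}
    (huK : u ∈ K) (hwK : w ∈ K) (hu : ‖u‖ = 1) (hw : ‖w‖ = 1) (y : Esp n) :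
    μ l / μ k * |coordMinor k l u w| ≤ 4 * hausdorffDist (diagAct μ '' K) {y} := by
  have hUW : dist (diagAct μ w) (diagAct μ u) ≤ 2 * hausdorffDist (diagAct μ '' K) {y} := by
    rw [two_mul]
    exact (dist_triangle_right _ _ y).trans (add_le_add
      (dist_diagAct_le_hausdorffDist μ hwK y) (dist_diagAct_le_hausdorffDist μ huK y))
  rw [dist_eq_norm] at hUW
  linarith [div_mul_abs_coordMinor_le hpos hmax l hu hw]

theorem abs_apply_le_hausdorffDist_add {μ : Fin (n + 1) → ℝ} (hpos : ∀ j, 0 < μ j)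
    {K : Set (Esp n)} {u : Esp n} (huK : u ∈ K) (hu : ‖u‖ = 1) {k : Fin (n + 1)}
    (huk : u k ≠ 0) (l : Fin (n + 1)) (y : Esp n) :
    |y l| ≤ hausdorffDist (diagAct μ '' K) {y} + μ l / (μ k * |u k|) := by
  have hUl : |diagAct μ u l| ≤ μ l / (μ k * |u k|) := by
    have h := abs_diagAct_apply_mul_le μ u k l
    rw [abs_mul, abs_mul, abs_of_pos (hpos k), abs_of_pos (hpos l)] at h
    have hul : μ l * |u l| ≤ μ l :=
      mul_le_of_le_one_right (hpos l).le (hu ▸ EuclideanSpace.abs_apply_le_norm u l)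
    rw [le_div_iff₀ (mul_pos (hpos k) (abs_pos.2 huk))]
    linarith
  have hyU : |(y - diagAct μ u) l| ≤ hausdorffDist (diagAct μ '' K) {y} := by
    refine (EuclideanSpace.abs_apply_le_norm _ l).trans ?_
    rw [← dist_eq_norm, dist_comm]
    exact dist_diagAct_le_hausdorffDist μ huK y
  rw [PiLp.sub_apply] at hyU
  linarith [abs_sub_abs_le_abs_sub (y l) (diagAct μ u l)]

theorem div_le_and_abs_apply_le_of_hausdorffDist {c : Esp n} (hc : ‖c‖ = 1) {s : ℝ}
    (hs0 : 0 < s) (hs1 : s ≤ 1) {K : Set (Esp n)} (hK : ∀ x, ‖x‖ = 1 → ‖x - c‖ ≤ 2 * s → x ∈ K)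
    {μ : Fin (n + 1) → ℝ} (hpos : ∀ j, 0 < μ j) {k l : Fin (n + 1)} (hmax : ∀ j, μ j ≤ μ k)
    (hkl : k ≠ l) (y : Esp n) :
    μ l / μ k ≤ 16 / s ^ 2 * hausdorffDist (diagAct μ '' K) {y} ∧
      |y l| ≤ hausdorffDist (diagAct μ '' K) {y} + 2 / s * (μ l / μ k) := by
  obtain ⟨u, w, hu, hw, huc, hwc, huk, huw⟩ :=
    exists_unit_pair_abs_coordMinor_ge hkl hc hs0 hs1
  have huK := hK u hu huc
  have hratio := div_mul_abs_coordMinor_le_hausdorffDist hpos hmax l huK (hK w hw hwc) hu hw y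
  have hμ : 0 ≤ μ l / μ k := div_nonneg (hpos l).le (hpos k).le
  constructor
  · rw [div_mul_eq_mul_div, le_div_iff₀ (by positivity)]
    nlinarith [mul_le_mul_of_nonneg_left huw hμ]
  · have huk0 : u k ≠ 0 := abs_pos.1 ((half_pos hs0).trans_le huk)
    refine (abs_apply_le_hausdorffDist_add hpos huK hu huk0 l y).trans (add_le_add_right ?_ _)
    rw [← div_div, div_le_iff₀ (abs_pos.2 huk0)]
    calc μ l / μ k = 2 / s * (μ l / μ k * (s / 2)) := by field_simp
      _ ≤ 2 / s * (μ l / μ k * |u k|) := by gcongr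
      _ = 2 / s * (μ l / μ k) * |u k| := by ring

end Hausdorff

theorem EuclideanSpace.eq_single_or_eq_neg_single {ι : Type*} [Fintype ι] [DecidableEq ι]
    {y : EuclideanSpace ℝ ι} (hy : ‖y‖ = 1) {k : ι} (hk : ∀ j, j ≠ k → y j = 0) :
    y = EuclideanSpace.single k 1 ∨ y = -EuclideanSpace.single k 1 := by
  have hyk : y = EuclideanSpace.single k (y k) := by
    ext j
    by_cases hj : j = k
    · simp [hj]
    · simp [hj, hk j hj]
  rw [hyk, PiLp.norm_single, Real.norm_eq_abs] at hy
  rcases abs_eq (zero_le_one' ℝ) |>.1 hy with h | h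
  · exact .inl (hyk.trans (by rw [h]))
  · exact .inr (hyk.trans (by rw [h, ← PiLp.single_neg]))

theorem eq_zero_of_forall_abs_le_of_tendsto {α : Type*} {l : Filter α} [l.NeBot] {a : ℝ}
    {f : α → ℝ} (hf : Tendsto f l (𝓝 0)) (ha : ∀ i, |a| ≤ f i) : a = 0 :=
  abs_nonpos_iff.1 (ge_of_tendsto' hf ha)

section RatioToMax

variable {α ι : Type*} {l : Filter α} {k : ι}

theorem exists_ne_sSup_eq [Finite ι] (hk : ∃ j, j ≠ k) (f : ι → ℝ) :
    ∃ j, j ≠ k ∧ sSup {r | ∃ j, j ≠ k ∧ r = f j} = f j := by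
  obtain ⟨j, hj⟩ := hk
  exact Set.Nonempty.csSup_mem (s := {r | ∃ j, j ≠ k ∧ r = f j}) ⟨f j, j, hj, rfl⟩
    ((Set.finite_range f).subset fun _ ⟨i, _, hr⟩ => ⟨i, hr.symm⟩)

theorem eventually_forall_lt_of_div_le {μ : α → ι → ℝ} (hpos : ∀ a j, 0 < μ a j)
    {f : α → ℝ} (hf : Tendsto f l (𝓝 0)) (hratio : ∀ a, ∀ j, j ≠ k → μ a j / μ a k ≤ f a) :
    ∀ᶠ a in l, ∀ j, j ≠ k → μ a j < μ a k :=
  (hf.eventually_lt_const zero_lt_one).mono fun a ha j hj =>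
    (div_lt_one (hpos a k)).1 ((hratio a j hj).trans_lt ha)

theorem tendsto_div_sSup_atTop [Finite ι] (hk : ∃ j, j ≠ k) {μ : α → ι → ℝ}
    (hpos : ∀ a j, 0 < μ a j) {f : α → ℝ} (hf : Tendsto f l (𝓝 0))
    (hratio : ∀ a, ∀ j, j ≠ k → μ a j / μ a k ≤ f a) :
    Tendsto (fun a => μ a k / sSup {r | ∃ j, j ≠ k ∧ r = μ a j}) l atTop := by
  choose J hJk hJ using fun a => exists_ne_sSup_eq hk (μ a)
  have hlim : Tendsto (fun a => μ a (J a) / μ a k) l (𝓝[>] 0) :=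
    tendsto_nhdsWithin_iff.2 ⟨squeeze_zero (fun a => (div_pos (hpos a _) (hpos a k)).le)
      (fun a => hratio a _ (hJk a)) hf, .of_forall fun a => div_pos (hpos a _) (hpos a k)⟩
  refine hlim.inv_tendsto_nhdsGT_zero.congr fun a => ?_
  rw [Pi.inv_apply, inv_div, hJ]

end RatioToMax

theorem diag_shrink_implies_attractor_general (n : ℕ) (hn : 1 ≤ n) (ε : ℝ) (hε : 0 < ε)
    (c : ℕ → Esp n) (hc : ∀ i, c i ∈ sphereSet n)
    (K : ℕ → Set (Esp n))
    (hK : ∀ i, K i = {x ∈ sphereSet n | sdist x (c i) ≤ ε})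
    (μ : ℕ → Fin (n + 1) → ℝ) (hpos : ∀ i j, 0 < μ i j)
    (hmax : ∀ i j, μ i j ≤ μ i 0)
    (y : Esp n)
    (hlim : HConv (fun i => diagAct (μ i) '' K i) {y}) :
    (y = EuclideanSpace.single 0 1 ∨ y = -(EuclideanSpace.single 0 1)) ∧
    (∃ N : ℕ, ∀ i > N, ∀ j : Fin (n + 1), j ≠ 0 → μ i j < μ i 0) ∧
    Filter.Tendsto
      (fun i => μ i 0 / sSup {r : ℝ | ∃ j : Fin (n + 1), j ≠ 0 ∧ r = μ i j})
      Filter.atTop Filter.atTop := by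
  set H := fun i => hausdorffDist (diagAct (μ i) '' K i) {y}
  have hH : Tendsto H atTop (𝓝 0) := hlim
  obtain ⟨r, hr, hsdist⟩ := exists_pos_forall_sdist_le (n := n) hε
  set s := min 1 (r / 2)
  have hs0 : 0 < s := lt_min one_pos (half_pos hr)
  have hKball : ∀ i x, ‖x‖ = 1 → ‖x - c i‖ ≤ 2 * s → x ∈ K i := fun i x hx hxc => by
    rw [hK i]
    exact ⟨hx, hsdist x (c i) hx (hc i) (by linarith [min_le_right 1 (r / 2)])⟩
  have hbound := fun i (j : Fin (n + 1)) (hj : j ≠ 0) => div_le_and_abs_apply_le_of_hausdorffDist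
    (hc i) hs0 (min_le_left _ _) (hKball i) (hpos i) (hmax i) hj.symm y
  have hratio : ∀ i, ∀ j, j ≠ 0 → μ i j / μ i 0 ≤ 16 / s ^ 2 * H i :=
    fun i j hj => (hbound i j hj).1
  have hratio0 : Tendsto (fun i => 16 / s ^ 2 * H i) atTop (𝓝 0) := by
    simpa using hH.const_mul (16 / s ^ 2)
  have hyj : ∀ j, j ≠ 0 → y j = 0 := fun j hj =>
    eq_zero_of_forall_abs_le_of_tendsto
      (by simpa using hH.add (hratio0.const_mul (2 / s)))
      fun i => (hbound i j hj).2.trans (by gcongr; exact hratio i j hj)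
  have hy1 : ‖y‖ = 1 := by
    have hcK : ∀ i, c i ∈ K i := fun i => hKball i _ (hc i) (by simp [hs0.le])
    linarith [eq_zero_of_forall_abs_le_of_tendsto hH
      fun i => abs_norm_sub_one_le_hausdorffDist (hpos i) (hcK i) (hc i) y]
  have hne : ∃ j : Fin (n + 1), j ≠ 0 := ⟨Fin.last n, by rw [Ne, Fin.last_eq_zero_iff]; omega⟩
  refine ⟨EuclideanSpace.eq_single_or_eq_neg_single hy1 hyj, ?_,
    tendsto_div_sSup_atTop hne hpos hratio0 hratio⟩
  obtain ⟨N, hN⟩ := eventually_atTop.1 (eventually_forall_lt_of_div_le hpos hratio0 hratio)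
  exact ⟨N, fun i hi => hN i hi.le⟩

/-- Lemma B.2: let `K i` be spherical `ε`-balls in `Sⁿ` and `d i` diagonal
matrices of determinant one with positive entries, the first entry being the
largest. If the images of the `K i` under the projective actions of the `d i`
converge to a singleton `{y}`, then `y = ±e₀`, eventually the first diagonal
entry is strictly largest, and the ratio of the first entry to the maximum of
the others tends to infinity. -/
theorem diag_shrink_implies_attractor (n : ℕ) (hn : 1 ≤ n) (ε : ℝ) (hε : 0 < ε)
    (c : ℕ → Esp n) (hc : ∀ i, c i ∈ sphereSet n)
    (K : ℕ → Set (Esp n))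
    (hK : ∀ i, K i = {x ∈ sphereSet n | sdist x (c i) ≤ ε})
    (μ : ℕ → Fin (n + 1) → ℝ) (hpos : ∀ i j, 0 < μ i j)
    (hdet : ∀ i, ∏ j, μ i j = 1)
    (hmax : ∀ i j, μ i j ≤ μ i 0)
    (y : Esp n)
    (hlim : HConv (fun i => diagAct (μ i) '' K i) {y}) :
    (y = EuclideanSpace.single 0 1 ∨ y = -(EuclideanSpace.single 0 1)) ∧
    (∃ N : ℕ, ∀ i > N, ∀ j : Fin (n + 1), j ≠ 0 → μ i j < μ i 0) ∧
    Filter.Tendsto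
      (fun i => μ i 0 / sSup {r : ℝ | ∃ j : Fin (n + 1), j ≠ 0 ∧ r = μ i j})
      Filter.atTop Filter.atTop :=
  diag_shrink_implies_attractor_general n hn ε hε c hc K hK μ hpos hmax y hlim
end
end
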